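/- arXiv:2008.09414 — 11 statements merged into one kernel-verified Lean document; each statement's English description precedes it below -/
import Mathlib

section
/- Let G = (V,E,ω) be a biconnected weighted graph that admits a max-constrained book-embedding. Then G has a single edge of maximum weight: there is exactly one edge e_M ∈ E such that ω(e_M) > ω(e) for every edge e ≠ e_M. -/
namespace Schematic

/-- A 1-page book-embedding of `G`: vertices are linearly ordered via an injective
real-valued placement `f`, and no two edges cross. -/
def IsBE {V : Type*} (G : SimpleGraph V) (f : V → ℝ) : Prop :=
  Function.Injective f ∧
  ∀ a b c d : V, G.Adj a b → G.Adj c d → ¬ (f a < f c ∧ f c < f b ∧ f b < f d)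

/-- Edge `(u,v)` wraps around edge `(w,z)` (equivalently, `(w,z)` is nested into `(u,v)`),
where `(w,z)` is written in increasing order. -/
def Wraps {V : Type*} (G : SimpleGraph V) (f : V → ℝ) (u v w z : V) : Prop :=
  G.Adj u v ∧ G.Adj w z ∧ s(u, v) ≠ s(w, z) ∧
  f u ≤ f w ∧ f w < f z ∧ f z ≤ f v

/-- A max-constrained book-embedding: whenever an edge wraps around another edge,
the outer edge has strictly larger weight. -/
def IsMaxBE {V : Type*} (G : SimpleGraph V) (ω : V → V → ℝ) (f : V → ℝ) : Prop :=
  IsBE G f ∧ ∀ u v w z : V, Wraps G f u v w z → ω w z < ω u v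

/-- A graph is biconnected if it has at least 3 vertices, is connected,
and deleting any single vertex leaves a connected graph. -/
def IsBiconnected {V : Type*} (G : SimpleGraph V) : Prop :=
  3 ≤ Nat.card V ∧ G.Connected ∧
  ∀ v : V, (G.induce (({v} : Set V)ᶜ)).Connected

private lemma reachable_exists_adj {V : Type*} {G : SimpleGraph V} {u v : V}
    (h : G.Reachable u v) (hne : u ≠ v) : ∃ w, G.Adj u w := by
  obtain ⟨p⟩ := h
  cases p with
  | nil => exact absurd rfl hne
  | cons h _ => exact ⟨_, h⟩

private lemma walk_cross {V : Type*} {G : SimpleGraph V} {s : Set V} (f : V → ℝ) (t : ℝ) :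
    ∀ {x y : s} (_ : (G.induce s).Walk x y), (∀ v ∈ s, f v ≠ t) →
      f x.1 < t → t < f y.1 → ∃ c d : V, G.Adj c d ∧ f c < t ∧ t < f d := by
  intro x y p
  induction p with
  | nil => intro _ h1 h2; exact absurd (h1.trans h2) (lt_irrefl _)
  | @cons a b c hadj p ih =>
    intro hs h1 h2
    by_cases hb : f b.1 < t
    · exact ih hs hb h2
    · refine ⟨a.1, b.1, hadj, h1, ?_⟩
      exact lt_of_le_of_ne (not_lt.mp hb) (Ne.symm (hs b.1 b.2))

/-- a biconnected weighted graph admitting a max-constrained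
book-embedding has exactly one edge of maximum weight. -/
theorem unique_max_weight_edge {V : Type*} [Fintype V]
    (G : SimpleGraph V) (ω : V → V → ℝ)
    (hsym : ∀ u v, ω u v = ω v u)
    (hpos : ∀ u v, G.Adj u v → 0 < ω u v)
    (hbi : IsBiconnected G)
    (f : V → ℝ) (hf : IsMaxBE G ω f) :
    ∃ a b : V, (G.Adj a b ∧
        ∀ u v : V, G.Adj u v → s(u, v) ≠ s(a, b) → ω u v < ω a b) ∧
      ∀ a' b' : V, (G.Adj a' b' ∧
        ∀ u v : V, G.Adj u v → s(u, v) ≠ s(a', b') → ω u v < ω a' b') →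
        s(a', b') = s(a, b) := by
  classical
  obtain ⟨hcard, hconn, hdel⟩ := hbi
  rw [Nat.card_eq_fintype_card] at hcard
  have hnt : Nontrivial V := Fintype.one_lt_card_iff_nontrivial.mp (by omega)
  have hne : (Finset.univ : Finset V).Nonempty := Finset.univ_nonempty
  obtain ⟨v1, -, hv1⟩ := Finset.exists_min_image Finset.univ f hne
  obtain ⟨vn, -, hvn⟩ := Finset.exists_max_image Finset.univ f hne
  obtain ⟨hinj, hcross⟩ := hf.1
  have hmin : ∀ u : V, f v1 ≤ f u := fun u => hv1 u (Finset.mem_univ u)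
  have hmax : ∀ u : V, f u ≤ f vn := fun u => hvn u (Finset.mem_univ u)
  -- v1 has a neighbor
  have hexadj : ∃ w, G.Adj v1 w := by
    obtain ⟨z, hz⟩ := exists_ne v1
    exact reachable_exists_adj (hconn.preconnected v1 z) hz.symm
  -- b : neighbor of v1 with max f
  have hnbne : (G.neighborFinset v1).Nonempty := by
    obtain ⟨w, hw⟩ := hexadj
    exact ⟨w, (SimpleGraph.mem_neighborFinset G v1 w).mpr hw⟩
  obtain ⟨b, hbmem, hbmax⟩ := Finset.exists_max_image (G.neighborFinset v1) f hnbne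
  have hadjb : G.Adj v1 b := (SimpleGraph.mem_neighborFinset G v1 b).mp hbmem
  -- claim b = vn
  have hbvn : b = vn := by
    by_contra hbne
    have hfv1b : f v1 < f b := lt_of_le_of_ne (hmin b) (fun h => hadjb.ne (hinj h))
    have hfbvn : f b < f vn := lt_of_le_of_ne (hmax b) (fun h => hbne (hinj h))
    have hv1mem : v1 ∈ ({b} : Set V)ᶜ := by
      simp only [Set.mem_compl_iff, Set.mem_singleton_iff]; exact hadjb.ne
    have hvnmem : vn ∈ ({b} : Set V)ᶜ := by
      simp only [Set.mem_compl_iff, Set.mem_singleton_iff]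
      exact fun h => hbne h.symm
    obtain ⟨p⟩ := (hdel b).preconnected ⟨v1, hv1mem⟩ ⟨vn, hvnmem⟩
    obtain ⟨c, d, hcd, hc1, hd1⟩ := walk_cross f (f b)
      p (fun v hv h => hv (show v ∈ ({b} : Set V) from hinj h)) hfv1b hfbvn
    have hnc := hcross v1 b c d hadjb hcd
    push_neg at hnc
    have hcle : f c ≤ f v1 := by
      by_contra hlt
      exact absurd hd1 (not_lt.mpr (hnc (not_le.mp hlt) hc1))
    have hceq : c = v1 := hinj (le_antisymm hcle (hmin c))
    subst hceq
    have : f d ≤ f b := hbmax d ((SimpleGraph.mem_neighborFinset G c d).mpr hcd)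
    exact absurd hd1 (not_lt.mpr this)
  subst hbvn
  -- edge (v1, b=vn) wraps every other edge
  have hwrap : ∀ u v : V, G.Adj u v → s(u, v) ≠ s(v1, b) → ω u v < ω v1 b := by
    intro u v huv hsne
    rcases lt_or_gt_of_ne (fun h => huv.ne (hinj h)) with hlt | hgt
    · exact hf.2 v1 b u v ⟨hadjb, huv, fun h => hsne h.symm, hmin u, hlt, hmax v⟩
    · have : ω v u < ω v1 b := by
        refine hf.2 v1 b v u ⟨hadjb, huv.symm, ?_, hmin v, hgt, hmax u⟩
        exact fun h => hsne (Sym2.eq_swap.trans h.symm)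
      rwa [hsym u v]
  refine ⟨v1, b, ⟨hadjb, hwrap⟩, ?_⟩
  rintro a' b' ⟨hadj', hmax'⟩
  by_contra hne'
  have h1 : ω a' b' < ω v1 b := hwrap a' b' hadj' hne'
  have h2 : ω v1 b < ω a' b' := hmax' v1 b hadjb (fun h => hne' h.symm)
  exact absurd (h1.trans h2) (lt_irrefl _)

end Schematic
end

section
/- Let G = (V,E,ω) be a biconnected weighted graph, let L be a max-constrained book-embedding of G, and let e_M = (a,b) be an edge of G such that ω(e_M) ≥ ω(e) for every edge e ∈ E. Then the endpoints of e_M are the first and the last vertex of L; that is, one of a, b is the ≺_L-minimum of V and the other is the ≺_L-maximum of V. -/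
namespace Schematic

lemma walk_pred {α : Type*} {H : SimpleGraph α} {P : α → Prop}
    (hP : ∀ x y, H.Adj x y → P x → P y) :
    ∀ {u v : α} (_ : H.Walk u v), P u → P v := by
  intro u v p
  induction p with
  | nil => exact id
  | cons h' p ih => exact fun hu => ih (hP _ _ h' hu)

lemma key {V : Type*} [Fintype V]
    (G : SimpleGraph V) (ω : V → V → ℝ)
    (hbi : IsBiconnected G)
    (f : V → ℝ) (hf : IsMaxBE G ω f)
    (a b : V) (hab : G.Adj a b)
    (hmax : ∀ u v, G.Adj u v → ω u v ≤ ω a b)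
    (hfab : f a < f b) :
    ∀ w : V, f a ≤ f w ∧ f w ≤ f b := by
  obtain ⟨⟨hinj, hcross⟩, hwrap⟩ := hf
  intro w
  constructor
  · by_contra hcon
    push_neg at hcon
    have step : ∀ x y : (({a} : Set V)ᶜ : Set V), (G.induce _).Adj x y →
        f x.1 < f a → f y.1 < f a := by
      rintro ⟨x, hx⟩ ⟨y, hy⟩ hadj hxa
      have hadj' : G.Adj x y := hadj
      have hy' : y ≠ a := by simpa using hy
      by_contra hge
      push_neg at hge
      have h1 : f a < f y := lt_of_le_of_ne hge (fun h => hy' (hinj h.symm))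
      rcases lt_or_ge (f y) (f b) with h2 | h2
      · exact hcross x y a b hadj' hab ⟨hxa, h1, h2⟩
      · have hxb : f x < f b := hxa.trans hfab
        have hsne : s(x, y) ≠ s(a, b) := by
          intro hs
          rw [Sym2.eq_iff] at hs
          rcases hs with ⟨rfl, rfl⟩ | ⟨rfl, rfl⟩
          · exact lt_irrefl _ hxa
          · exact lt_irrefl _ hxb
        exact absurd (hmax x y hadj')
          (not_le.mpr (hwrap x y a b ⟨hadj', hab, hsne, le_of_lt hxa, hfab, h2⟩))
    have hwmem : w ∈ (({a} : Set V)ᶜ : Set V) := by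
      simp only [Set.mem_compl_iff, Set.mem_singleton_iff]
      exact fun h => absurd rfl (ne_of_lt (h ▸ hcon))
    have hbmem : b ∈ (({a} : Set V)ᶜ : Set V) := by
      simp only [Set.mem_compl_iff, Set.mem_singleton_iff]
      exact hab.ne'
    obtain ⟨p⟩ := (hbi.2.2 a).preconnected ⟨w, hwmem⟩ ⟨b, hbmem⟩
    exact absurd (walk_pred step p hcon) (not_lt.mpr (le_of_lt hfab))
  · by_contra hcon
    push_neg at hcon
    have step : ∀ x y : (({b} : Set V)ᶜ : Set V), (G.induce _).Adj x y →
        f b < f x.1 → f b < f y.1 := by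
      rintro ⟨x, hx⟩ ⟨y, hy⟩ hadj hxb
      have hadj' : G.Adj x y := hadj
      have hy' : y ≠ b := by simpa using hy
      by_contra hge
      push_neg at hge
      have h1 : f y < f b := lt_of_le_of_ne hge (fun h => hy' (hinj h))
      rcases lt_or_ge (f a) (f y) with h2 | h2
      · exact hcross a b y x hab hadj'.symm ⟨h2, h1, hxb⟩
      · have hxa : f a < f x := hfab.trans hxb
        have hsne : s(y, x) ≠ s(a, b) := by
          intro hs
          rw [Sym2.eq_iff] at hs
          rcases hs with ⟨rfl, rfl⟩ | ⟨rfl, rfl⟩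
          · exact lt_irrefl _ hxb
          · exact lt_irrefl _ hxa
        exact absurd (hmax y x hadj'.symm)
          (not_le.mpr (hwrap y x a b ⟨hadj'.symm, hab, hsne, h2, hfab, le_of_lt hxb⟩))
    have hwmem : w ∈ (({b} : Set V)ᶜ : Set V) := by
      simp only [Set.mem_compl_iff, Set.mem_singleton_iff]
      exact fun h => absurd rfl (ne_of_lt (h ▸ hcon))
    have hamem : a ∈ (({b} : Set V)ᶜ : Set V) := by
      simp only [Set.mem_compl_iff, Set.mem_singleton_iff]
      exact hab.ne
    obtain ⟨p⟩ := (hbi.2.2 b).preconnected ⟨w, hwmem⟩ ⟨a, hamem⟩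
    exact absurd (walk_pred step p hcon) (not_lt.mpr (le_of_lt hfab))

/-- in a max-constrained book-embedding of a biconnected weighted graph,
the endpoints of a maximum-weight edge are the first and the last vertex. -/
theorem max_edge_endpoints_extreme {V : Type*} [Fintype V]
    (G : SimpleGraph V) (ω : V → V → ℝ)
    (hsym : ∀ u v, ω u v = ω v u)
    (hpos : ∀ u v, G.Adj u v → 0 < ω u v)
    (hbi : IsBiconnected G)
    (f : V → ℝ) (hf : IsMaxBE G ω f)
    (a b : V) (hab : G.Adj a b)
    (hmax : ∀ u v, G.Adj u v → ω u v ≤ ω a b) :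
    (∀ w : V, f a ≤ f w ∧ f w ≤ f b) ∨ (∀ w : V, f b ≤ f w ∧ f w ≤ f a) := by
  rcases lt_or_gt_of_ne (fun h => hab.ne (hf.1.1 h)) with h | h
  · exact Or.inl (key G ω hbi f hf a b hab hmax h)
  · refine Or.inr (key G ω hbi f hf b a hab.symm ?_ h)
    intro u v huv
    rw [hsym b a]
    exact hmax u v huv

end Schematic
end

section
/- Let G = (V,E,ω) be a biconnected weighted graph. If L and L' are both max-constrained book-embeddings of G, then L' = L or L' is the flip of L; that is, the max-constrained book-embedding of a biconnected weighted graph is unique up to a flip. -/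
/-!
In a 1-page book-embedding of a biconnected graph, two vertices that are consecutive on the spine
are adjacent: otherwise the innermost edge spanning the gap between them has an endpoint whose
deletion disconnects the graph. Rotating the circle obtained by closing up the spine, the first and
last vertex are adjacent as well. So the boundary of the outer face, the Hamiltonian cycle through
consecutive vertices closed by this hinge edge, is a subgraph of `G`.

The hinge wraps around every other edge, so in a max-constrained embedding it is the unique
heaviest edge of `G`; two such embeddings therefore share it and, after a flip, have the same
first and last vertex. The first embedding is then a non-crossing embedding of the (biconnected)
outer cycle of the second, so vertices consecutive in one order are consecutive in the other, and
the two orders agree.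
-/

namespace Schematic

open Function

section BookEmbedding

variable {V : Type*}

section Placement

variable {g : V → ℝ}

def Consec (g : V → ℝ) (u v : V) : Prop :=
  g u < g v ∧ ∀ z, g u < g z → g v ≤ g z

theorem wellFounded_lt_comp [Finite V] (g : V → ℝ) : WellFounded fun u v => g u < g v :=
  Finite.wellFounded_of_trans_of_irrefl _

theorem exists_consec_of_lt [Finite V] {a v : V} (h : g a < g v) :
    ∃ p, Consec g p v ∧ g a ≤ g p := by
  obtain ⟨p, hpv, hmax⟩ :=
    Set.exists_max_image {z | g z < g v} g (Set.toFinite _) ⟨a, h⟩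
  exact ⟨p, ⟨hpv, fun z hpz => not_lt.mp fun hzv => (hmax z hzv).not_gt hpz⟩, hmax a h⟩

theorem Consec.lt_iff (hg : Injective g) {p v : V} (h : Consec g p v) {z : V} :
    g z < g v ↔ g z < g p ∨ z = p := by
  refine ⟨fun hz => ?_, ?_⟩
  · rcases lt_trichotomy (g z) (g p) with hlt | heq | hgt
    · exact .inl hlt
    · exact .inr (hg heq)
    · exact absurd hz (not_lt.mpr (h.2 z hgt))
  · rintro (hz | rfl)
    · exact hz.trans h.1
    · exact h.1

theorem lt_iff_lt_of_consec [Finite V] {f f' : V → ℝ} (hf : Injective f) (hf' : Injective f')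
    {m : V} (hm : ∀ z, f m ≤ f z) (hm' : ∀ z, f' m ≤ f' z)
    (h : ∀ p v, Consec f p v → Consec f' p v ∨ Consec f' v p) (u v : V) :
    f u < f v ↔ f' u < f' v := by
  induction v using (wellFounded_lt_comp f).induction generalizing u with
  | _ v ih =>
  obtain rfl | hmv := eq_or_ne m v
  · exact iff_of_false (hm u).not_gt (hm' u).not_gt
  obtain ⟨p, hp, -⟩ := exists_consec_of_lt ((hm v).lt_of_ne (hf.ne hmv))
  have hp' : Consec f' p v := (h p v hp).resolve_right fun hvp =>
    ((ih p hp.1 v).mpr hvp.1).not_gt hp.1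
  rw [hp.lt_iff hf, hp'.lt_iff hf', ih p hp.1]

theorem ne_of_min_of_max [Nontrivial V] (hg : Injective g) {m M : V} (hm : ∀ z, g m ≤ g z)
    (hM : ∀ z, g z ≤ g M) : m ≠ M := by
  rintro rfl
  obtain ⟨a, b, hab⟩ := exists_pair_ne V
  exact hab (hg ((le_antisymm (hM a) (hm a)).trans (le_antisymm (hm b) (hM b))))

theorem not_consec_min_max [Finite V] (hg : Injective g) (h3 : 3 ≤ Nat.card V) {m M : V}
    (hm : ∀ z, g m ≤ g z) (hM : ∀ z, g z ≤ g M) : ¬ Consec g m M := by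
  intro h
  obtain ⟨z, hzm, hzM⟩ :=
    ENat.exists_ne_ne_of_three_le (by rw [ENat.card_eq_coe_natCard]; exact_mod_cast h3) m M
  exact hzM (hg ((hM z).antisymm (h.2 z ((hm z).lt_of_ne (hg.ne hzm.symm)))))

def CyclicConsec (g : V → ℝ) (u v : V) : Prop :=
  Consec g u v ∨ (∀ z, g z ≤ g u) ∧ ∀ z, g v ≤ g z

def outerCycle (g : V → ℝ) : SimpleGraph V :=
  SimpleGraph.fromRel (CyclicConsec g)

theorem outerCycle_induce_reachable [Finite V] (hg : Injective g) {s : Set V} {a b : V}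
    (ha : a ∈ s) (hb : b ∈ s) (hab : g a ≤ g b) (hs : ∀ z, g a ≤ g z → g z ≤ g b → z ∈ s) :
    ((outerCycle g).induce s).Reachable ⟨a, ha⟩ ⟨b, hb⟩ := by
  induction b using (wellFounded_lt_comp g).induction with
  | _ b ih =>
  obtain rfl | hne := eq_or_ne a b
  · rfl
  obtain ⟨p, hp, hap⟩ := exists_consec_of_lt (hab.lt_of_ne (hg.ne hne))
  have hps : p ∈ s := hs p hap hp.1.le
  have hadj : ((outerCycle g).induce s).Adj ⟨p, hps⟩ ⟨b, hb⟩ :=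
    (SimpleGraph.fromRel_adj _ _ _).mpr ⟨fun h => hp.1.ne (congrArg g h), .inl (.inl hp)⟩
  exact (ih p hp.1 hps hap fun z h1 h2 => hs z h1 (h2.trans hp.1.le)).trans hadj.reachable

theorem isBiconnected_outerCycle [Finite V] (hg : Injective g) (h3 : 3 ≤ Nat.card V) :
    IsBiconnected (outerCycle g) := by
  have : Nontrivial V := Finite.one_lt_card_iff_nontrivial.mp (by omega)
  obtain ⟨m, hm⟩ := Finite.exists_min g
  obtain ⟨M, hM⟩ := Finite.exists_max g
  have hmM : m ≠ M := ne_of_min_of_max hg hm hM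
  refine ⟨h3, ?_, fun x => ?_⟩
  · refine (SimpleGraph.connected_iff_exists_forall_reachable _).mpr ⟨m, fun w => ?_⟩
    exact (outerCycle_induce_reachable hg (s := Set.univ) trivial trivial (hm w)
      fun _ _ _ => trivial).map (SimpleGraph.Embedding.induce _).toHom
  rw [SimpleGraph.connected_iff_exists_forall_reachable]
  obtain rfl | hxm := eq_or_ne m x
  · refine ⟨⟨M, hmM.symm⟩, fun ⟨w, hw⟩ => ?_⟩
    exact (outerCycle_induce_reachable hg hw _ (hM w) fun z hwz _ (hzm : z = m) =>
      hw (hg ((hzm ▸ hwz).antisymm (hm w)))).symm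
  refine ⟨⟨m, hxm⟩, fun ⟨w, hw⟩ => ?_⟩
  rcases (hg.ne hw).lt_or_gt with hwx | hxw
  · exact outerCycle_induce_reachable hg _ hw (hm w) fun z _ hzw (hzx : z = x) =>
      (hzw.trans_lt hwx).ne (congrArg g hzx)
  · have hMx : M ≠ x := fun h => (hxw.trans_le (hM w)).ne' (congrArg g h)
    have hMm : ((outerCycle g).induce {x}ᶜ).Adj ⟨M, hMx⟩ ⟨m, hxm⟩ :=
      (SimpleGraph.fromRel_adj _ _ _).mpr ⟨hmM.symm, .inl (.inr ⟨hM, hm⟩)⟩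
    exact hMm.reachable.symm.trans
      (outerCycle_induce_reachable hg hw hMx (hM w) fun z hwz _ (hzx : z = x) =>
        (hxw.trans_le hwz).ne' (congrArg g hzx)).symm

end Placement

theorem exists_adj_of_induce_connected {G : SimpleGraph V} {T S : Set V}
    (hG : (G.induce T).Connected) {s t : V} (hs : s ∈ T) (ht : t ∈ T) (hsS : s ∈ S)
    (htS : t ∉ S) : ∃ y z, G.Adj y z ∧ y ∈ S ∧ z ∉ S ∧ z ∈ T := by
  obtain ⟨d, -, hy, hz⟩ := (hG.preconnected ⟨s, hs⟩ ⟨t, ht⟩).some.exists_boundary_dart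
    (Subtype.val ⁻¹' S) hsS htS
  exact ⟨d.fst, d.snd, d.adj, hy, hz, d.snd.2⟩

namespace IsBE

variable {G : SimpleGraph V} {g : V → ℝ}

theorem neg (h : IsBE G g) : IsBE G (-g) := by
  refine ⟨neg_injective.comp h.1, fun a b c d hab hcd ⟨h₁, h₂, h₃⟩ => ?_⟩
  simp only [Pi.neg_apply, neg_lt_neg_iff] at h₁ h₂ h₃
  exact h.2 d c b a hcd.symm hab.symm ⟨h₃, h₂, h₁⟩

theorem mono {H : SimpleGraph V} (h : IsBE G g) (hle : H ≤ G) : IsBE H g :=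
  ⟨h.1, fun a b c d hab hcd => h.2 a b c d (hle hab) (hle hcd)⟩

-- Moving the first vertex behind the last one rotates the circle closing up the spine;
-- whether two chords of a circle cross is invariant under rotation.
theorem update_min [DecidableEq V] (h : IsBE G g) {m : V} (hm : ∀ z, g m ≤ g z) {c : ℝ}
    (hc : ∀ z, g z < c) : IsBE G (update g m c) := by
  have hle : ∀ y, update g m c y ≤ c := fun y => by
    by_cases hy : y = m
    · rw [hy, update_self]
    · rw [update_of_ne hy]; exact (hc y).le
  have hlt : ∀ x y, update g m c x < update g m c y → x ≠ m ∧ update g m c x = g x := by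
    intro x y hxy
    have hx : x ≠ m := fun hx => (hxy.trans_le (hle y)).ne (by rw [hx, update_self])
    exact ⟨hx, update_of_ne hx _ _⟩
  refine ⟨fun x y hxy => ?_, fun a b c' d hab hcd ⟨h₁, h₂, h₃⟩ => ?_⟩
  · by_cases hx : x = m <;> by_cases hy : y = m
    · exact hx.trans hy.symm
    · rw [hx, update_self, update_of_ne hy] at hxy; exact absurd hxy (hc y).ne'
    · rw [hy, update_self, update_of_ne hx] at hxy; exact absurd hxy (hc x).ne
    · rw [update_of_ne hx, update_of_ne hy] at hxy; exact h.1 hxy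
  obtain ⟨ha, ha'⟩ := hlt _ _ h₁
  obtain ⟨hc', hc''⟩ := hlt _ _ h₂
  obtain ⟨hb, hb'⟩ := hlt _ _ h₃
  rw [ha', hc''] at h₁
  rw [hc'', hb'] at h₂
  obtain rfl | hd := eq_or_ne d m
  · exact h.2 d c' a b hcd.symm hab ⟨(hm a).lt_of_ne (h.1.ne ha.symm), h₁, h₂⟩
  · rw [hb', update_of_ne hd] at h₃
    exact h.2 a b c' d hab hcd ⟨h₁, h₂, h₃⟩

theorem exists_innermost_cut [Finite V] (h : IsBE G g) (hconn : G.Connected) {u v : V}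
    (huv : Consec g u v) : ∃ a b, G.Adj a b ∧ g a ≤ g u ∧ g v ≤ g b ∧
      ∀ c d, G.Adj c d → g c ≤ g u → g v ≤ g d → g c ≤ g a ∧ g b ≤ g d := by
  obtain ⟨e, -, he₁, he₂⟩ := (hconn.preconnected u v).some.exists_boundary_dart
    {z | g z ≤ g u} (le_refl (g u)) huv.1.not_ge
  obtain ⟨a, ⟨hau, b₀, hab₀, hvb₀⟩, hamax⟩ :=
    Set.exists_max_image {c | g c ≤ g u ∧ ∃ d, G.Adj c d ∧ g v ≤ g d} g (Set.toFinite _)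
      ⟨_, he₁, _, e.adj, huv.2 _ (lt_of_not_ge he₂)⟩
  obtain ⟨b, ⟨hab, hvb⟩, hbmin⟩ :=
    Set.exists_min_image {d | G.Adj a d ∧ g v ≤ g d} g (Set.toFinite _) ⟨b₀, hab₀, hvb₀⟩
  refine ⟨a, b, hab, hau, hvb, fun c d hcd hcu hvd => ⟨hamax c ⟨hcu, d, hcd, hvd⟩, ?_⟩⟩
  rcases (hamax c ⟨hcu, d, hcd, hvd⟩).lt_or_eq with hca | hca
  · exact not_lt.mp fun hdb =>
      h.2 c d a b hcd hab ⟨hca, hau.trans_lt (huv.1.trans_le hvd), hdb⟩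
  · exact hbmin d ⟨h.1 hca ▸ hcd, hvd⟩

theorem adj_of_consec [Finite V] (h : IsBE G g) (hbi : IsBiconnected G) {u v : V}
    (huv : Consec g u v) : G.Adj u v := by
  by_contra hadj
  obtain ⟨a, b, hab, hau, hvb, hinner⟩ := h.exists_innermost_cut hbi.2.1 huv
  have hub : g u < g b := huv.1.trans_le hvb
  rcases hau.lt_or_eq with hau | hau
  -- deleting `a` separates the vertices in `(a, u]` from `b`
  · obtain ⟨y, z, hyz, ⟨hay, hyu⟩, hz, hza⟩ := exists_adj_of_induce_connected (hbi.2.2 a)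
      (S := {z | g a < g z ∧ g z ≤ g u}) (fun h => hau.ne (congrArg g h).symm)
      (fun h => (hau.trans hub).ne (congrArg g h).symm) ⟨hau, le_rfl⟩ fun h => hub.not_ge h.2
    refine hz ⟨lt_of_le_of_ne (not_lt.mp fun hza' => ?_) fun heq => hza (h.1 heq).symm,
      not_lt.mp fun huz => (hinner y z hyz hyu (huv.2 z huz)).1.not_gt hay⟩
    exact h.2 z y a b hyz.symm hab ⟨hza', hay, hyu.trans_lt hub⟩
  -- deleting `b` separates the vertices in `[v, b)` from `a = u`
  · obtain rfl := h.1 hau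
    have hvb : g v < g b := hvb.lt_of_ne fun h' => hadj (h.1 h' ▸ hab)
    obtain ⟨y, z, hyz, ⟨hvy, hyb⟩, hz, hzb⟩ := exists_adj_of_induce_connected (hbi.2.2 b)
      (S := {z | g v ≤ g z ∧ g z < g b}) (fun h => hvb.ne (congrArg g h))
      (fun h => hab.ne h) ⟨le_rfl, hvb⟩ fun h => huv.1.not_ge h.1
    refine hz ⟨not_lt.mp fun hzv => ?_, lt_of_le_of_ne (not_lt.mp fun hbz => ?_)
      fun heq => hzb (h.1 heq)⟩
    · exact (hinner z y hyz.symm (not_lt.mp fun huz => (huv.2 z huz).not_gt hzv) hvy).2.not_gt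
        hyb
    · exact h.2 a b y z hab hyz ⟨huv.1.trans_le hvy, hyb, hbz⟩

theorem adj_of_max_of_min [Finite V] (h : IsBE G g) (hbi : IsBiconnected G) {u v : V}
    (hu : ∀ z, g z ≤ g u) (hv : ∀ z, g v ≤ g z) (huv : u ≠ v) : G.Adj u v := by
  classical
  refine (h.update_min hv fun z => (hu z).trans_lt (lt_add_one _)).adj_of_consec hbi
    ⟨?_, fun z hz => ?_⟩
  · rw [update_self, update_of_ne huv]; exact lt_add_one _
  · by_cases hzv : z = v
    · rw [hzv]
    · rw [update_of_ne huv, update_of_ne hzv] at hz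
      exact absurd hz (hu z).not_gt

theorem adj_min_max [Finite V] (h : IsBE G g) (hbi : IsBiconnected G) {m M : V}
    (hm : ∀ z, g m ≤ g z) (hM : ∀ z, g z ≤ g M) : G.Adj m M :=
  have : Nontrivial V := Finite.one_lt_card_iff_nontrivial.mp (by have := hbi.1; omega)
  (h.adj_of_max_of_min hbi hM hm (ne_of_min_of_max h.1 hm hM).symm).symm

theorem outerCycle_le [Finite V] (h : IsBE G g) (hbi : IsBiconnected G) : outerCycle g ≤ G := by
  have hadj : ∀ u v, u ≠ v → CyclicConsec g u v → G.Adj u v := fun u v hne huv =>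
    huv.elim (h.adj_of_consec hbi) fun ⟨hu, hv⟩ => h.adj_of_max_of_min hbi hu hv hne
  intro u v huv
  obtain ⟨hne, huv | hvu⟩ := (SimpleGraph.fromRel_adj _ _ _).mp huv
  · exact hadj u v hne huv
  · exact (hadj v u hne.symm hvu).symm

theorem lt_iff_lt_of_min_max [Finite V] {f f' : V → ℝ} (hf : IsBE G f) (hf' : IsBE G f')
    (hbi : IsBiconnected G) {m M : V} (hm : ∀ z, f m ≤ f z) (hm' : ∀ z, f' m ≤ f' z)
    (hM : ∀ z, f z ≤ f M) (hM' : ∀ z, f' z ≤ f' M) (u v : V) :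
    f u < f v ↔ f' u < f' v := by
  have hC : IsBE (outerCycle f') f := hf.mono (hf'.outerCycle_le hbi)
  refine lt_iff_lt_of_consec hf.1 hf'.1 hm hm' (fun p v hpv => ?_) u v
  obtain ⟨-, hc | hc⟩ := (SimpleGraph.fromRel_adj _ _ _).mp
    (hC.adj_of_consec (isBiconnected_outerCycle hf'.1 hbi.1) hpv)
  · rcases hc with hc | ⟨-, hv⟩
    · exact .inl hc
    · obtain rfl := hf'.1 ((hv m).antisymm (hm' v))
      exact absurd hpv.1 (hm p).not_gt
  · rcases hc with hc | ⟨hv, hp⟩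
    · exact .inr hc
    · obtain rfl := hf'.1 ((hM' v).antisymm (hv M))
      obtain rfl := hf'.1 ((hp m).antisymm (hm' p))
      exact absurd hpv (not_consec_min_max hf.1 hbi.1 hm hM)

end IsBE

namespace IsMaxBE

variable {G : SimpleGraph V} {ω : V → V → ℝ} {f : V → ℝ}

theorem weight_lt_of_min_max (hsym : ∀ u v, ω u v = ω v u) (hf : IsMaxBE G ω f) {m M : V}
    (hm : ∀ z, f m ≤ f z) (hM : ∀ z, f z ≤ f M) (hmM : G.Adj m M) {w z : V}
    (hwz : G.Adj w z) (hne : s(m, M) ≠ s(w, z)) : ω w z < ω m M := by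
  rcases (hf.1.1.ne hwz.ne).lt_or_gt with hlt | hgt
  · exact hf.2 m M w z ⟨hmM, hwz, hne, hm w, hlt, hM z⟩
  · rw [hsym]
    exact hf.2 m M z w ⟨hmM, hwz.symm, fun h => hne (h.trans Sym2.eq_swap), hm z, hgt, hM w⟩

theorem hinge_eq [Finite V] (hsym : ∀ u v, ω u v = ω v u) (hbi : IsBiconnected G)
    {f' : V → ℝ} (hf : IsMaxBE G ω f) (hf' : IsMaxBE G ω f') {m M m' M' : V}
    (hm : ∀ z, f m ≤ f z) (hM : ∀ z, f z ≤ f M) (hm' : ∀ z, f' m' ≤ f' z)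
    (hM' : ∀ z, f' z ≤ f' M') : s(m, M) = s(m', M') := by
  have hmM := hf.1.adj_min_max hbi hm hM
  have hmM' := hf'.1.adj_min_max hbi hm' hM'
  by_contra hne
  exact (hf.weight_lt_of_min_max hsym hm hM hmM hmM' hne).not_gt
    (hf'.weight_lt_of_min_max hsym hm' hM' hmM' hmM (Ne.symm hne))

end IsMaxBE

end BookEmbedding

theorem max_be_unique_up_to_flip_general {V : Type*} [Fintype V]
    (G : SimpleGraph V) (ω : V → V → ℝ)
    (hsym : ∀ u v, ω u v = ω v u)
    (hbi : IsBiconnected G)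
    (f f' : V → ℝ) (hf : IsMaxBE G ω f) (hf' : IsMaxBE G ω f') :
    (∀ u v : V, f u < f v ↔ f' u < f' v) ∨
    (∀ u v : V, f u < f v ↔ f' v < f' u) := by
  have : Nonempty V := Finite.card_pos_iff.mp (by have := hbi.1; omega)
  obtain ⟨m, hm⟩ := Finite.exists_min f
  obtain ⟨M, hM⟩ := Finite.exists_max f
  obtain ⟨m', hm'⟩ := Finite.exists_min f'
  obtain ⟨M', hM'⟩ := Finite.exists_max f'
  rcases Sym2.eq_iff.mp (hf.hinge_eq hsym hbi hf' hm hM hm' hM') with ⟨rfl, rfl⟩ | ⟨rfl, rfl⟩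
  · exact .inl (hf.1.lt_iff_lt_of_min_max hf'.1 hbi hm hm' hM hM')
  · refine .inr fun u v => ?_
    rw [hf.1.lt_iff_lt_of_min_max hf'.1.neg hbi hm (fun z => neg_le_neg (hM' z)) hM
      (fun z => neg_le_neg (hm' z)), Pi.neg_apply, Pi.neg_apply, neg_lt_neg_iff]

/-- the max-constrained book-embedding of a biconnected weighted graph is
unique up to a flip. -/
theorem max_be_unique_up_to_flip {V : Type*} [Fintype V]
    (G : SimpleGraph V) (ω : V → V → ℝ)
    (hsym : ∀ u v, ω u v = ω v u)
    (hpos : ∀ u v, G.Adj u v → 0 < ω u v)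
    (hbi : IsBiconnected G)
    (f f' : V → ℝ) (hf : IsMaxBE G ω f) (hf' : IsMaxBE G ω f') :
    (∀ u v : V, f u < f v ↔ f' u < f' v) ∨
    (∀ u v : V, f u < f v ↔ f' v < f' u) :=
  max_be_unique_up_to_flip_general G ω hsym hbi f f' hf hf'

end Schematic
end

section
/- (Extreme-parent property.) Let G = (V,E,ω) be a connected weighted graph, let L be a max-constrained book-embedding of G, and let e_M be an edge of G such that ω(e_M) ≥ ω(e) for every edge e ∈ E. Let c ∈ V and let H ⊆ V with c ∈ H be such that H hangs from c, the subgraph of G induced by H∖{c} is connected, and neither endpoint of e_M lies in H∖{c}. Then c is the first or the last vertex of H in L: either c ⪯_L w for every w ∈ H, or w ⪯_L c for every w ∈ H. -/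
namespace Schematic

/-- `H` hangs from `c`: `c ∈ H`, no edge of `G` joins a vertex of `H \ {c}` to a vertex
outside `H`, and the subgraph induced by the complement of `H \ {c}` is connected. -/
def HangsFrom {V : Type*} (G : SimpleGraph V) (H : Set V) (c : V) : Prop :=
  c ∈ H ∧
  (∀ u v : V, G.Adj u v → u ∈ H \ {c} → v ∈ H) ∧
  (G.induce ((H \ {c})ᶜ)).Connected

/-- Along a walk inside `S`, if the start lies below `fc` and the end above `fc`,
some edge of `G` with both endpoints in `S` straddles `fc`. -/
lemma straddle {V : Type*} {G : SimpleGraph V} {S : Set V} {f : V → ℝ} {fc : ℝ}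
    (hne : ∀ w : S, f ↑w ≠ fc) :
    ∀ {u v : S}, (G.induce S).Walk u v → f ↑u < fc → fc < f ↑v →
      ∃ x y, x ∈ S ∧ y ∈ S ∧ G.Adj x y ∧ f x < fc ∧ fc < f y := by
  intro u v p
  induction p with
  | nil => intro h1 h2; exact absurd h2 (not_lt.mpr h1.le)
  | @cons u u' v h q ih =>
    intro h1 h2
    rcases lt_or_gt_of_ne (hne u') with h' | h'
    · exact ih h' h2
    · exact ⟨↑u, ↑u', u.2, u'.2, h, h1, h'⟩

/-- If `(x,y)` is an edge with both endpoints outside `S`, a walk inside `S` starting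
strictly between `f x` and `f y` stays strictly between them (no crossings). -/
lemma inside {V : Type*} {G : SimpleGraph V} {f : V → ℝ} (hbe : IsBE G f) {S : Set V}
    {x y : V} (hx : x ∉ S) (hy : y ∉ S) (hadjxy : G.Adj x y) :
    ∀ {u v : S}, (G.induce S).Walk u v → f x < f ↑u → f ↑u < f y →
      f x < f ↑v ∧ f ↑v < f y := by
  intro u v p
  induction p with
  | nil => intro h1 h2; exact ⟨h1, h2⟩
  | @cons u u' v h q ih =>
    intro h1 h2
    have hqx : f ↑u' ≠ f x := fun hh => hx (hbe.1 hh ▸ u'.2)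
    have hqy : f ↑u' ≠ f y := fun hh => hy (hbe.1 hh ▸ u'.2)
    have hadj : G.Adj (↑u) (↑u') := h
    have h1' : f x < f ↑u' := by
      rcases lt_or_gt_of_ne hqx with hlt | hgt
      · exact absurd ⟨hlt, h1, h2⟩ (hbe.2 ↑u' ↑u x y hadj.symm hadjxy)
      · exact hgt
    have h2' : f ↑u' < f y := by
      rcases lt_or_gt_of_ne hqy with hlt | hgt
      · exact hlt
      · exact absurd ⟨h1, h2, hgt⟩ (hbe.2 x y ↑u ↑u' hadjxy hadj)
    exact ih h1' h2'

/-- extreme-parent property, max-constrained version. -/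
theorem extreme_parent_max {V : Type*} [Fintype V]
    (G : SimpleGraph V) (ω : V → V → ℝ)
    (hsym : ∀ u v, ω u v = ω v u)
    (hpos : ∀ u v, G.Adj u v → 0 < ω u v)
    (hconn : G.Connected)
    (f : V → ℝ) (hf : IsMaxBE G ω f)
    (a b : V) (hab : G.Adj a b)
    (hmax : ∀ u v, G.Adj u v → ω u v ≤ ω a b)
    (c : V) (H : Set V) (hH : HangsFrom G H c)
    (hHconn : (G.induce (H \ {c})).Connected)
    (ha : a ∉ H \ {c}) (hb : b ∉ H \ {c}) :
    (∀ w ∈ H, f c ≤ f w) ∨ (∀ w ∈ H, f w ≤ f c) := by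
  by_contra hcon
  push_neg at hcon
  obtain ⟨⟨w1, hw1H, hw1⟩, ⟨w2, hw2H, hw2⟩⟩ := hcon
  have hinj := hf.1.1
  have hw1c : w1 ∈ H \ {c} := ⟨hw1H, fun hh => absurd (congrArg f hh) (ne_of_lt hw1)⟩
  have hw2c : w2 ∈ H \ {c} := ⟨hw2H, fun hh => absurd (congrArg f hh) (ne_of_gt hw2)⟩
  -- find an edge x--y inside H \ {c} straddling f c
  obtain ⟨p⟩ := hHconn.preconnected ⟨w1, hw1c⟩ ⟨w2, hw2c⟩
  have hne : ∀ w : (H \ {c} : Set V), f ↑w ≠ f c := by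
    intro w hh
    exact w.2.2 (hinj hh)
  obtain ⟨x, y, hxS, hyS, hadjxy, hx1, hy1⟩ := straddle hne p hw1 hw2
  -- the complement of H \ {c} is connected, contains c, a, b
  have hcS : c ∈ (H \ {c})ᶜ := fun hh => hh.2 rfl
  obtain ⟨pa⟩ := hH.2.2.preconnected ⟨c, hcS⟩ ⟨a, ha⟩
  obtain ⟨pb⟩ := hH.2.2.preconnected ⟨c, hcS⟩ ⟨b, hb⟩
  have hxS' : x ∉ (H \ {c})ᶜ := fun hh => hh hxS
  have hyS' : y ∉ (H \ {c})ᶜ := fun hh => hh hyS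
  have hfa := inside hf.1 hxS' hyS' hadjxy pa hx1 hy1
  have hfb := inside hf.1 hxS' hyS' hadjxy pb hx1 hy1
  -- so the maximum edge (a,b) is nested inside (x,y): contradiction
  have hsne : ∀ u v : V, u ∉ H \ {c} → v ∉ H \ {c} → s(x, y) ≠ s(u, v) := by
    intro u v hu hv hh
    rw [Sym2.eq_iff] at hh
    rcases hh with ⟨h1, _⟩ | ⟨h1, _⟩
    · exact hu (h1 ▸ hxS)
    · exact hv (h1 ▸ hxS)
  have hfab : f a ≠ f b := fun hh => hab.ne (hinj hh)
  rcases lt_or_gt_of_ne hfab with hlt | hgt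
  · have hwr : Wraps G f x y a b :=
      ⟨hadjxy, hab, hsne a b ha hb, hfa.1.le, hlt, hfb.2.le⟩
    have := hf.2 x y a b hwr
    have := hmax x y hadjxy
    linarith
  · have hwr : Wraps G f x y b a :=
      ⟨hadjxy, hab.symm, hsne b a hb ha, hfb.1.le, hgt, hfa.2.le⟩
    have := hf.2 x y b a hwr
    have := hmax x y hadjxy
    have := hsym a b
    linarith

end Schematic
end

section
/- Let G = (V,E,ω) be a connected weighted graph, let L be a sum-constrained book-embedding of G, and let e_M be an edge of G such that ω(e_M) ≥ ω(e) for every edge e ∈ E. Let c ∈ V and let H ⊆ V with c ∈ H be such that H hangs from c and neither endpoint of e_M lies in H∖{c}. Then c is visible in the restriction of L to H: there is no edge of G with both endpoints in H having one endpoint strictly before c and the other strictly after c in L. -/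
namespace Schematic

/-- A sum-constrained book-embedding: for every edge `(u,v)` (with `u ≺ v`) and every
sequence of edges `(aᵢ,bᵢ)` distinct from `(u,v)` with
`u ⪯ a₀ ≺ b₀ ⪯ a₁ ≺ b₁ ⪯ ⋯ ⪯ v`, the weight of `(u,v)` exceeds the sum of the
weights of the `(aᵢ,bᵢ)`. -/
def IsSumBE {V : Type*} (G : SimpleGraph V) (ω : V → V → ℝ) (f : V → ℝ) : Prop :=
  IsBE G f ∧
  ∀ u v : V, G.Adj u v → f u < f v →
    ∀ (k : ℕ) (a b : Fin k → V),
      (∀ i, G.Adj (a i) (b i)) →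
      (∀ i, s(a i, b i) ≠ s(u, v)) →
      (∀ i, f u ≤ f (a i)) →
      (∀ i, f (a i) < f (b i)) →
      (∀ i, f (b i) ≤ f v) →
      (∀ i j, i < j → f (b i) ≤ f (a j)) →
      ∑ i, ω (a i) (b i) < ω u v

/-- in a sum-constrained book-embedding, a vertex `c` from which a set `H`
avoiding the maximum-weight edge hangs is visible in the restriction to `H`. -/
theorem hanging_vertex_visible_sum {V : Type*} [Fintype V]
    (G : SimpleGraph V) (ω : V → V → ℝ)
    (hsym : ∀ u v, ω u v = ω v u)
    (hpos : ∀ u v, G.Adj u v → 0 < ω u v)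
    (hconn : G.Connected)
    (f : V → ℝ) (hf : IsSumBE G ω f)
    (a b : V) (hab : G.Adj a b)
    (hmax : ∀ u v, G.Adj u v → ω u v ≤ ω a b)
    (c : V) (H : Set V) (hH : HangsFrom G H c)
    (ha : a ∉ H \ {c}) (hb : b ∉ H \ {c}) :
    ¬ ∃ u v : V, G.Adj u v ∧ u ∈ H ∧ v ∈ H ∧ f u < f c ∧ f c < f v := by

  rintro ⟨u, v, huv, huH, hvH, hufc, hcfv⟩
  obtain ⟨⟨hinj, hcross⟩, hsum⟩ := hf
  have hune : u ≠ c := fun h => by simp [h] at hufc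
  have hvne : v ≠ c := fun h => by simp [h] at hcfv
  have huHc : u ∈ H \ {c} := ⟨huH, hune⟩
  have hvHc : v ∈ H \ {c} := ⟨hvH, hvne⟩
  set K : Set V := (H \ {c})ᶜ with hK
  have hcK : c ∈ K := fun h => h.2 rfl
  have haK : a ∈ K := ha
  have hbK : b ∈ K := hb
  -- key : anything reachable from c in the induced graph lies strictly inside (f u, f v)
  have key : ∀ x y : K, (G.induce K).Reachable x y →
      (f u < f x.1 ∧ f x.1 < f v) → (f u < f y.1 ∧ f y.1 < f v) := by
    intro x y h hx
    obtain ⟨w⟩ := h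
    induction w with
    | nil => exact hx
    | cons hadj p ih =>
      rename_i x' z' y' 
      apply ih
      have hgadj : G.Adj x'.1 z'.1 := hadj
      have hzu : z'.1 ≠ u := fun h => (z'.2 (h ▸ huHc))
      have hzv : z'.1 ≠ v := fun h => (z'.2 (h ▸ hvHc))
      have h1 : f z'.1 ≠ f u := fun h => hzu (hinj h)
      have h2 : f z'.1 ≠ f v := fun h => hzv (hinj h)
      constructor
      · rcases lt_or_gt_of_ne h1 with h | h
        · exact absurd ⟨h, hx.1, hx.2⟩ (hcross z'.1 x'.1 u v hgadj.symm huv)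
        · exact h
      · rcases lt_or_gt_of_ne h2 with h | h
        · exact h
        · exact absurd ⟨hx.1, hx.2, h⟩ (hcross u v x'.1 z'.1 huv hgadj)
  have hPc : f u < f c ∧ f c < f v := ⟨hufc, hcfv⟩
  have hPa := key ⟨c, hcK⟩ ⟨a, haK⟩ (hH.2.2 ⟨c, hcK⟩ ⟨a, haK⟩) hPc
  have hPb := key ⟨c, hcK⟩ ⟨b, hbK⟩ (hH.2.2 ⟨c, hcK⟩ ⟨b, hbK⟩) hPc
  -- choose ordered endpoints of the max edge
  have hab' : a ≠ b := hab.ne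
  have hfab : f a ≠ f b := fun h => hab' (hinj h)
  obtain ⟨a', b', hadj', hord, hw, ha'range, hb'range⟩ :
      ∃ a' b', G.Adj a' b' ∧ f a' < f b' ∧ ω a' b' = ω a b ∧
        (f u < f a' ∧ f a' < f v) ∧ (f u < f b' ∧ f b' < f v) := by
    rcases lt_or_gt_of_ne hfab with h | h
    · exact ⟨a, b, hab, h, rfl, hPa, hPb⟩
    · exact ⟨b, a, hab.symm, h, hsym b a, hPb, hPa⟩
  have hne : s(a', b') ≠ s(u, v) := by
    intro h
    rcases Sym2.eq_iff.mp h with ⟨h1, h2⟩ | ⟨h1, h2⟩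
    · exact absurd (h1 ▸ ha'range.1) (lt_irrefl _)
    · exact absurd (h1 ▸ ha'range.2) (lt_irrefl _)
  have := hsum u v huv (hufc.trans hcfv) 1 (fun _ => a') (fun _ => b')
    (fun _ => hadj') (fun _ => hne) (fun _ => le_of_lt ha'range.1)
    (fun _ => hord) (fun _ => le_of_lt hb'range.2)
    (fun i j hij => absurd (Fin.lt_iff_val_lt_val.mp hij) (by omega))
  rw [Fin.sum_univ_one, hw] at this
  exact absurd (hmax u v huv) (not_le.mpr this)


end Schematic
end

section
/- Let G = (V,E,ω) be a connected weighted graph, let L be a sum-constrained book-embedding of G, and let e_M be an edge of G such that ω(e_M) ≥ ω(e) for every edge e ∈ E. Let c ∈ V and let H ⊆ V with c ∈ H be such that H hangs from c, the subgraph of G induced by H∖{c} is connected, and neither endpoint of e_M lies in H∖{c}. Then c is the first or the last vertex of H in L: either c ⪯_L w for every w ∈ H, or w ⪯_L c for every w ∈ H. -/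
namespace Schematic

/-- Along any walk from below `r` to above `r` (never hitting `r`), some edge
crosses `r`. -/
lemma cross_step {W : Type*} {G : SimpleGraph W} (g : W → ℝ) (r : ℝ)
    {s t : W} (p : G.Walk s t) (hne : ∀ x ∈ p.support, g x ≠ r)
    (hs : g s < r) (ht : r < g t) :
    ∃ x y, G.Adj x y ∧ g x < r ∧ r < g y := by
  induction p with
  | nil => exact absurd ht (by linarith)
  | @cons s u t h q ih =>
    by_cases hu : g u < r
    · exact ih (fun x hx => hne x (by simp [hx])) hu ht
    · have hune : g u ≠ r := hne u (by simp)
      exact ⟨s, u, h, hs, lt_of_le_of_ne (not_lt.mp hu) (Ne.symm hune)⟩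

/-- Invariance of an open interval along a walk, given that each step preserves it. -/
lemma stay_in {W : Type*} {G : SimpleGraph W} (g : W → ℝ) (lo hi : ℝ)
    (hstep : ∀ u v, G.Adj u v → lo < g u → g u < hi → lo < g v ∧ g v < hi)
    {s t : W} (p : G.Walk s t) (hs : lo < g s ∧ g s < hi) :
    lo < g t ∧ g t < hi := by
  induction p with
  | nil => exact hs
  | @cons s u t h q ih => exact ih (hstep _ _ h hs.1 hs.2)

/-- extreme-parent property, sum-constrained version. -/
theorem extreme_parent_sum {V : Type*} [Fintype V]
    (G : SimpleGraph V) (ω : V → V → ℝ)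
    (hsym : ∀ u v, ω u v = ω v u)
    (hpos : ∀ u v, G.Adj u v → 0 < ω u v)
    (hconn : G.Connected)
    (f : V → ℝ) (hf : IsSumBE G ω f)
    (a b : V) (hab : G.Adj a b)
    (hmax : ∀ u v, G.Adj u v → ω u v ≤ ω a b)
    (c : V) (H : Set V) (hH : HangsFrom G H c)
    (hHconn : (G.induce (H \ {c})).Connected)
    (ha : a ∉ H \ {c}) (hb : b ∉ H \ {c}) :
    (∀ w ∈ H, f c ≤ f w) ∨ (∀ w ∈ H, f w ≤ f c) := by
  have hfinj : Function.Injective f := hf.1.1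
  have hnc := hf.1.2
  by_contra hcon
  push_neg at hcon
  obtain ⟨⟨w1, hw1H, hw1⟩, ⟨w2, hw2H, hw2⟩⟩ := hcon
  -- hw1 : f w1 < f c, hw2 : f c < f w2
  have hw1' : w1 ∈ H \ {c} := ⟨hw1H, fun h => absurd hw1 (by simp at h; simp [h])⟩
  have hw2' : w2 ∈ H \ {c} := ⟨hw2H, fun h => absurd hw2 (by simp at h; simp [h])⟩
  -- a walk in the induced graph on H \ {c} from w1 to w2
  obtain ⟨p⟩ := hHconn.preconnected ⟨w1, hw1'⟩ ⟨w2, hw2'⟩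
  have hne : ∀ x ∈ p.support, f (x : V) ≠ f c := by
    intro x _ hx
    exact x.2.2 (hfinj hx)
  obtain ⟨x, y, hxy, hx, hy⟩ := cross_step (fun z : ↥(H \ {c}) => f (z : V)) (f c) p hne hw1 hw2
  have hxyG : G.Adj (x : V) (y : V) := hxy
  -- the component of c in the complement of H \ {c} stays inside (f x, f y)
  have hcS : c ∈ (H \ {c})ᶜ := fun h => h.2 rfl
  have hstep : ∀ u v : ↥((H \ {c})ᶜ), (G.induce ((H \ {c})ᶜ)).Adj u v →
      f (x : V) < f (u : V) → f (u : V) < f (y : V) →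
      f (x : V) < f (v : V) ∧ f (v : V) < f (y : V) := by
    intro u v huv hlo hhi
    have huvG : G.Adj (u : V) (v : V) := huv
    have hvx : f (v : V) ≠ f (x : V) := fun h => v.2 (hfinj h ▸ x.2)
    have hvy : f (v : V) ≠ f (y : V) := fun h => v.2 (hfinj h ▸ y.2)
    constructor
    · by_contra hle
      have h1 : f (v : V) < f (x : V) := lt_of_le_of_ne (not_lt.mp hle) hvx
      exact hnc (v : V) (u : V) (x : V) (y : V) huvG.symm hxyG ⟨h1, hlo, hhi⟩
    · by_contra hle
      have h1 : f (y : V) < f (v : V) := lt_of_le_of_ne (not_lt.mp hle) (Ne.symm hvy)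
      exact hnc (x : V) (y : V) (u : V) (v : V) hxyG huvG ⟨hlo, hhi, h1⟩
  have hin : ∀ (z : V) (hz : z ∈ (H \ {c})ᶜ),
      f (x : V) < f z ∧ f z < f (y : V) := by
    intro z hz
    obtain ⟨q⟩ := hH.2.2.preconnected ⟨c, hcS⟩ ⟨z, hz⟩
    exact stay_in (fun w : ↥((H \ {c})ᶜ) => f (w : V)) _ _ hstep q ⟨hx, hy⟩
  have hain := hin a ha
  have hbin := hin b hb
  -- prepare the ordered inner edge
  obtain ⟨a', b', hab', ha', hb', hfa, hfb, hflt, hw⟩ :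
      ∃ a' b', G.Adj a' b' ∧ a' ∉ H \ {c} ∧ b' ∉ H \ {c} ∧
        f (x : V) < f a' ∧ f b' < f (y : V) ∧ f a' < f b' ∧ ω a' b' = ω a b := by
    rcases lt_or_gt_of_ne (fun h => hab.ne (hfinj h) : f a ≠ f b) with h | h
    · exact ⟨a, b, hab, ha, hb, hain.1, hbin.2, h, rfl⟩
    · exact ⟨b, a, hab.symm, hb, ha, hbin.1, hain.2, h, hsym b a⟩
  have hne' : s(a', b') ≠ s((x : V), (y : V)) := by
    intro h
    rw [Sym2.eq_iff] at h
    rcases h with ⟨h1, _⟩ | ⟨h1, _⟩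
    · exact ha' (h1 ▸ x.2)
    · exact ha' (h1 ▸ y.2)
  have hsum := hf.2 (x : V) (y : V) hxyG (lt_trans hx hy) 1
    (fun _ => a') (fun _ => b')
    (fun _ => hab') (fun _ => hne') (fun _ => le_of_lt hfa) (fun _ => hflt)
    (fun _ => le_of_lt hfb) (fun i j hij => absurd hij (by omega))
  simp only [Fin.sum_univ_one] at hsum
  have := hmax (x : V) (y : V) hxyG
  rw [hw] at hsum
  linarith

end Schematic
end

section
/- Let H = (V,E,ω) be a connected weighted graph with n vertices and let c ∈ V. Let S be a set of sum-constrained book-embeddings of H such that (1) c is visible in every member of S, and (2) for any two distinct members L, L' of S, L does not left-right dominate L' with respect to c and L is not left-right equivalent to L' with respect to c. Then S contains at most n embeddings. -/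
namespace Schematic

/-- A vertex `c` is visible in a book-embedding: no edge has one endpoint strictly
before `c` and the other strictly after `c`. -/
def Visible {V : Type*} (G : SimpleGraph V) (f : V → ℝ) (c : V) : Prop :=
  ¬ ∃ u v : V, G.Adj u v ∧ f u < f c ∧ f c < f v

open Classical in
/-- The extension of a book-embedding to the left of a (visible) vertex `c`: the sum of
the weights of the outermost edges both of whose endpoints are `⪯ c`. -/
noncomputable def leftExt {V : Type*} [Fintype V] (G : SimpleGraph V)
    (ω : V → V → ℝ) (f : V → ℝ) (c : V) : ℝ :=
  ∑ p : V × V,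
    if G.Adj p.1 p.2 ∧ f p.1 < f p.2 ∧ f p.2 ≤ f c ∧
        ¬ ∃ w z : V, Wraps G f w z p.1 p.2
    then ω p.1 p.2 else 0

open Classical in
/-- The extension of a book-embedding to the right of a (visible) vertex `c`: the sum of
the weights of the outermost edges both of whose endpoints are `⪰ c`. -/
noncomputable def rightExt {V : Type*} [Fintype V] (G : SimpleGraph V)
    (ω : V → V → ℝ) (f : V → ℝ) (c : V) : ℝ :=
  ∑ p : V × V,
    if G.Adj p.1 p.2 ∧ f p.1 < f p.2 ∧ f c ≤ f p.1 ∧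
        ¬ ∃ w z : V, Wraps G f w z p.1 p.2
    then ω p.1 p.2 else 0

/-- The coordinate function of a canonical book-embedding given as a bijection
from the vertices to `Fin n`. -/
def coords {V : Type*} [Fintype V] (σ : V ≃ Fin (Fintype.card V)) (v : V) : ℝ :=
  ((σ v : ℕ) : ℝ)

/-- Two book-embeddings (with `c` visible in both) are left-right equivalent with
respect to `c` if they have the same extensions to the left and to the right of `c`. -/
def LREquiv {V : Type*} [Fintype V] (G : SimpleGraph V) (ω : V → V → ℝ)
    (f f' : V → ℝ) (c : V) : Prop :=
  leftExt G ω f c = leftExt G ω f' c ∧ rightExt G ω f c = rightExt G ω f' c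

/-- `f` left-right dominates `f'` with respect to `c`. -/
def LRDominates {V : Type*} [Fintype V] (G : SimpleGraph V) (ω : V → V → ℝ)
    (f f' : V → ℝ) (c : V) : Prop :=
  leftExt G ω f c ≤ leftExt G ω f' c ∧ rightExt G ω f c ≤ rightExt G ω f' c ∧
  (leftExt G ω f c < leftExt G ω f' c ∨ rightExt G ω f c < rightExt G ω f' c)

set_option linter.unusedSectionVars false

section Aux

set_option linter.unusedSectionVars false
open Finset Classical

variable {V : Type*} [Fintype V] {G : SimpleGraph V} {ω : V → V → ℝ} {f : V → ℝ} {c : V}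

/-- No edge spans the position of `t`. -/
def SpanFree (G : SimpleGraph V) (f : V → ℝ) (t : V) : Prop :=
  ∀ a b, G.Adj a b → ¬ (f a < f t ∧ f t < f b)

open Classical in
noncomputable def leftSum (G : SimpleGraph V) (ω : V → V → ℝ) (f : V → ℝ) (c t : V) : ℝ :=
  ∑ p : V × V,
    if G.Adj p.1 p.2 ∧ f p.1 < f p.2 ∧ f p.2 ≤ f c ∧ f t ≤ f p.1 ∧
        ¬ ∃ w z : V, Wraps G f w z p.1 p.2
    then ω p.1 p.2 else 0

lemma nested_lt (hbe : IsSumBE G ω f) {u v a b : V} (huv : G.Adj u v) (hab : G.Adj a b)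
    (h1 : f u ≤ f a) (h2 : f a < f b) (h3 : f b ≤ f v) (hne : s(a, b) ≠ s(u, v)) :
    ω a b < ω u v := by
  have huv' : f u < f v := lt_of_le_of_lt h1 (h2.trans_le h3)
  have := hbe.2 u v huv huv' 1 (fun _ => a) (fun _ => b)
    (fun _ => hab) (fun _ => hne) (fun _ => h1) (fun _ => h2) (fun _ => h3)
    (fun i j hij => absurd (Subsingleton.elim i j) (ne_of_lt hij))
  simpa using this

lemma spanFree_of_outermost (hbe : IsBE G f) (hvis : Visible G f c) {u t : V}
    (hadj : G.Adj u t) (hut : f u < f t) (htc : f t ≤ f c)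
    (hout : ¬ ∃ w z : V, Wraps G f w z u t) : SpanFree G f t := by
  rintro a b hab ⟨hat, htb⟩
  have hbc : f b ≤ f c := by
    by_contra hb; push_neg at hb
    exact hvis ⟨a, b, hab, hat.trans_le htc, hb⟩
  rcases le_or_gt (f a) (f u) with h | h
  · refine hout ⟨a, b, hab, hadj, ?_, h, hut, htb.le⟩
    intro hss; rw [Sym2.eq_iff] at hss
    rcases hss with ⟨h1, h2⟩ | ⟨h1, h2⟩ <;> subst h2 <;> linarith
  · exact hbe.2 u t a b hadj hab ⟨h, hat, htb⟩

lemma exists_next (hbe : IsSumBE G ω f) (hvis : Visible G f c) (hconn : G.Connected)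
    {t : V} (hsf : SpanFree G f t) (htc : f t < f c) :
    ∃ s : V, G.Adj t s ∧ f t < f s ∧ f s ≤ f c ∧
      (∀ b, G.Adj t b → f t < f b → f b ≤ f c → f b ≤ f s) ∧
      ¬ ∃ w z : V, Wraps G f w z t s := by
  have hinj := hbe.1.1
  have hex : ∃ s, G.Adj t s ∧ f t < f s ∧ f s ≤ f c := by
    obtain ⟨p⟩ := hconn.preconnected t c
    have key : ∀ (a d : V), G.Walk a d → f a ≤ f t → f t < f d →
        ∃ x y, G.Adj x y ∧ f x ≤ f t ∧ f t < f y := by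
      intro a d p
      induction p with
      | nil => intro h1 h2; exact absurd h2 (not_lt.mpr h1)
      | @cons x y w h q ih =>
        intro h1 h2
        by_cases hy : f y ≤ f t
        · exact ih hy h2
        · push_neg at hy; exact ⟨x, y, h, h1, hy⟩
    obtain ⟨x, y, hxy, hx, hy⟩ := key t c p le_rfl htc
    have hxt : x = t := hinj (le_antisymm hx
      (not_lt.mp fun hlt => hsf x y hxy ⟨hlt, hy⟩))
    subst hxt
    have hyc : f y ≤ f c := not_lt.mp fun hcy => hvis ⟨x, y, hxy, htc, hcy⟩
    exact ⟨y, hxy, hy, hyc⟩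
  obtain ⟨s0, hs0⟩ := hex
  obtain ⟨s, hs, hmax⟩ := Finset.exists_max_image
    (univ.filter fun v => G.Adj t v ∧ f t < f v ∧ f v ≤ f c) f
    ⟨s0, by simp [hs0.1, hs0.2.1, hs0.2.2]⟩
  simp only [mem_filter, mem_univ, true_and] at hs
  have hmax' : ∀ b, G.Adj t b → f t < f b → f b ≤ f c → f b ≤ f s := by
    intro b h1 h2 h3; exact hmax b (by simp [h1, h2, h3])
  refine ⟨s, hs.1, hs.2.1, hs.2.2, hmax', ?_⟩
  rintro ⟨w, z, hwz, hts, hne, hwt, hts2, hsz⟩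
  have hzc : f z ≤ f c := not_lt.mp fun hcz =>
    hvis ⟨w, z, hwz, lt_of_le_of_lt hwt htc, hcz⟩
  rcases lt_or_eq_of_le hwt with h | h
  · exact hsf w z hwz ⟨h, hts2.trans_le hsz⟩
  · have hwteq : w = t := hinj h
    subst hwteq
    have h1 : f w < f z := hts2.trans_le hsz
    have h2 : f z ≤ f s := hmax' z hwz h1 hzc
    have h3 : z = s := hinj (le_antisymm h2 hsz)
    subst h3
    exact hne rfl

lemma walk_side (hbe : IsBE G f) {t : V} (hsf : SpanFree G f t) :
    ∀ (a d : V), (p : G.Walk a d) → (∀ v ∈ p.support, v ≠ t) → f t < f d → f t < f a := by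
  intro a d p
  induction p with
  | nil => exact fun _ h => h
  | @cons x y w h q ih =>
    intro hsup hd
    have hy : f t < f y := ih (fun v hv => hsup v (by simp [hv])) hd
    have hx : x ≠ t := hsup x (by simp)
    have h1 : ¬ f x < f t := fun hlt => hsf x y h ⟨hlt, hy⟩
    exact lt_of_le_of_ne (not_lt.mp h1) fun he => hx (hbe.1 he.symm)

lemma region_walk (hbe : IsSumBE G ω f) (hvis : Visible G f c) (hconn : G.Connected) :
    ∀ (k : ℕ) (t : V), (univ.filter fun v => f t < f v).card ≤ k → SpanFree G f t →
      f t ≤ f c → ∃ p : G.Walk t c, ∀ v ∈ p.support, f t ≤ f v := by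
  have hinj := hbe.1.1
  intro k
  induction k with
  | zero =>
    intro t hcard hsf htc
    have hte : t = c := by
      by_contra hne
      have h1 : f t < f c := lt_of_le_of_ne htc fun h => hne (hinj h)
      have h2 : c ∈ univ.filter (fun v => f t < f v) := by simp [h1]
      have := Finset.card_pos.mpr ⟨c, h2⟩; omega
    subst hte
    exact ⟨SimpleGraph.Walk.nil, by simp⟩
  | succ k ih =>
    intro t hcard hsf htc
    rcases eq_or_lt_of_le htc with h | h
    · have hte : t = c := hinj h
      subst hte; exact ⟨SimpleGraph.Walk.nil, by simp⟩
    · obtain ⟨s, hadj, hts, hsc, hmax, hout⟩ := exists_next hbe hvis hconn hsf h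
      have hsfs : SpanFree G f s := spanFree_of_outermost hbe.1 hvis hadj hts hsc hout
      have hlt : (univ.filter fun v => f s < f v).card <
          (univ.filter fun v => f t < f v).card := by
        apply Finset.card_lt_card
        refine ⟨fun v hv => ?_, fun hsub => ?_⟩
        · simp only [mem_filter, mem_univ, true_and] at hv ⊢; exact hts.trans hv
        · have hsmem : s ∈ univ.filter fun v => f t < f v := by simp [hts]
          have := hsub hsmem
          simp at this
      obtain ⟨q, hq⟩ := ih s (by omega) hsfs hsc
      refine ⟨SimpleGraph.Walk.cons hadj q, ?_⟩
      intro v hv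
      rw [SimpleGraph.Walk.support_cons] at hv
      rcases List.mem_cons.mp hv with rfl | hv
      · exact le_rfl
      · exact hts.le.trans (hq v hv)

lemma leftSum_at_c : leftSum G ω f c c = 0 := by
  refine Finset.sum_eq_zero fun p _ => if_neg ?_
  rintro ⟨_, h2, h3, h4, _⟩
  exact absurd (h4.trans_lt h2) (not_lt.mpr h3)

lemma leftSum_step (hbe : IsSumBE G ω f) (hvis : Visible G f c) {t s : V}
    (hadj : G.Adj t s) (hts : f t < f s) (hsc : f s ≤ f c)
    (hmax : ∀ b, G.Adj t b → f t < f b → f b ≤ f c → f b ≤ f s)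
    (hout : ¬ ∃ w z : V, Wraps G f w z t s) :
    leftSum G ω f c t = ω t s + leftSum G ω f c s := by
  classical
  have hinj := hbe.1.1
  have hsfs : SpanFree G f s := spanFree_of_outermost hbe.1 hvis hadj hts hsc hout
  have key : ∀ p : V × V, G.Adj p.1 p.2 → f p.1 < f p.2 → f p.2 ≤ f c → f t ≤ f p.1 →
      (¬ ∃ w z : V, Wraps G f w z p.1 p.2) → p ≠ (t, s) → f s ≤ f p.1 := by
    rintro ⟨a, b⟩ ha hab hbc hta hout2 hp
    simp only at *
    by_contra hcon; push_neg at hcon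
    rcases eq_or_lt_of_le hta with h | h
    · have h1 : a = t := hinj h.symm
      have h2 : f b ≤ f s := hmax b (h1 ▸ ha) (h1 ▸ hab) hbc
      have h3 : b ≠ s := fun he => hp (by rw [h1, he])
      refine hout2 ⟨t, s, hadj, ha, ?_, h.le, hab, h2⟩
      intro hss; rw [Sym2.eq_iff] at hss
      rcases hss with ⟨h4, h5⟩ | ⟨h4, h5⟩
      · exact h3 h5.symm
      · have hc2 := hcon; rw [← h5] at hc2; exact absurd hc2 (lt_irrefl _)
    · rcases le_or_gt (f b) (f s) with h2 | h2
      · refine hout2 ⟨t, s, hadj, ha, ?_, h.le, hab, h2⟩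
        intro hss; rw [Sym2.eq_iff] at hss
        rcases hss with ⟨h4, h5⟩ | ⟨h4, h5⟩
        · rw [← h4] at h; exact absurd h (lt_irrefl _)
        · rw [← h5] at hcon; exact absurd hcon (lt_irrefl _)
      · exact hsfs a b ha ⟨hcon, h2⟩
  have h1 : ∀ p : V × V,
      (if G.Adj p.1 p.2 ∧ f p.1 < f p.2 ∧ f p.2 ≤ f c ∧ f t ≤ f p.1 ∧
          ¬ ∃ w z : V, Wraps G f w z p.1 p.2 then ω p.1 p.2 else 0) =
      (if p = (t, s) then ω t s else 0) +
      (if G.Adj p.1 p.2 ∧ f p.1 < f p.2 ∧ f p.2 ≤ f c ∧ f s ≤ f p.1 ∧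
          ¬ ∃ w z : V, Wraps G f w z p.1 p.2 then ω p.1 p.2 else 0) := by
    intro p
    by_cases hp : p = (t, s)
    · subst hp
      rw [if_pos rfl, if_pos ⟨hadj, hts, hsc, le_rfl, hout⟩, if_neg, add_zero]
      rintro ⟨_, _, _, h4, _⟩
      exact absurd (lt_of_le_of_lt h4 hts) (lt_irrefl _)
    · rw [if_neg hp, zero_add]
      by_cases hC : G.Adj p.1 p.2 ∧ f p.1 < f p.2 ∧ f p.2 ≤ f c ∧ f t ≤ f p.1 ∧
          ¬ ∃ w z : V, Wraps G f w z p.1 p.2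
      · obtain ⟨c1, c2, c3, c4, c5⟩ := hC
        rw [if_pos ⟨c1, c2, c3, c4, c5⟩,
          if_pos ⟨c1, c2, c3, key p c1 c2 c3 c4 c5 hp, c5⟩]
      · rw [if_neg hC, if_neg]
        rintro ⟨c1, c2, c3, c4, c5⟩
        exact hC ⟨c1, c2, c3, (hts.le.trans c4), c5⟩
  unfold leftSum
  rw [Finset.sum_congr rfl fun p _ => h1 p, Finset.sum_add_distrib]
  congr 1
  rw [Finset.sum_ite_eq' Finset.univ (t, s) fun _ => ω t s]
  simp

lemma main_eq {f f' : V → ℝ} (hbe : IsSumBE G ω f) (hbe' : IsSumBE G ω f')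
    (hvis : Visible G f c) (hvis' : Visible G f' c) (hconn : G.Connected) :
    ∀ (k : ℕ) (t : V), (univ.filter fun v => f t < f v).card ≤ k →
      SpanFree G f t → SpanFree G f' t → f t ≤ f c → f' t ≤ f' c →
      leftSum G ω f c t = leftSum G ω f' c t := by
  have hinj := hbe.1.1
  have hinj' := hbe'.1.1
  intro k
  induction k with
  | zero =>
    intro t hcard hsf hsf' htc htc'
    have hte : t = c := by
      by_contra hne
      have h1 : f t < f c := lt_of_le_of_ne htc fun h => hne (hinj h)
      have h2 : c ∈ univ.filter (fun v => f t < f v) := by simp [h1]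
      have := Finset.card_pos.mpr ⟨c, h2⟩; omega
    subst hte
    rw [leftSum_at_c, leftSum_at_c]
  | succ k ih =>
    intro t hcard hsf hsf' htc htc'
    by_cases hte : t = c
    · subst hte; rw [leftSum_at_c, leftSum_at_c]
    · have h : f t < f c := lt_of_le_of_ne htc fun he => hte (hinj he)
      have h' : f' t < f' c := lt_of_le_of_ne htc' fun he => hte (hinj' he)
      obtain ⟨s, hadj, hts, hsc, hmax, hout⟩ := exists_next hbe hvis hconn hsf h
      obtain ⟨s', hadj', hts', hsc', hmax', hout'⟩ := exists_next hbe' hvis' hconn hsf' h'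
      have hsfs : SpanFree G f s := spanFree_of_outermost hbe.1 hvis hadj hts hsc hout
      have hsfs' : SpanFree G f' s' := spanFree_of_outermost hbe'.1 hvis' hadj' hts' hsc' hout'
      -- position of s' in f
      have hfs' : f t < f s' := by
        obtain ⟨q, hq⟩ := region_walk hbe' hvis' hconn _ s' le_rfl hsfs' hsc'
        refine walk_side hbe.1 hsf s' c q (fun v hv => ?_) h
        intro he; rw [he] at hv
        exact absurd (hq t hv) (not_le.mpr hts')
      have hs'c : f s' ≤ f c := not_lt.mp fun hc2 => hvis ⟨t, s', hadj', h, hc2⟩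
      -- position of s in f'
      have hfs : f' t < f' s := by
        obtain ⟨q, hq⟩ := region_walk hbe hvis hconn _ s le_rfl hsfs hsc
        refine walk_side hbe'.1 hsf' s c q (fun v hv => ?_) h'
        intro he; rw [he] at hv
        exact absurd (hq t hv) (not_le.mpr hts)
      have hsc2 : f' s ≤ f' c := not_lt.mp fun hc2 => hvis' ⟨t, s, hadj, h', hc2⟩
      have hss : s = s' := by
        by_contra hne
        have h1 : f s' ≤ f s := hmax s' hadj' hfs' hs'c
        have h2 : f' s ≤ f' s' := hmax' s hadj hfs hsc2
        have hne1 : s(t, s') ≠ s(t, s) := by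
          intro hss; rw [Sym2.eq_iff] at hss
          rcases hss with ⟨h4, h5⟩ | ⟨h4, h5⟩
          · exact hne h5.symm
          · rw [h5] at hts'; exact absurd hts' (lt_irrefl _)
        have hne2 : s(t, s) ≠ s(t, s') := by
          intro hss; rw [Sym2.eq_iff] at hss
          rcases hss with ⟨h4, h5⟩ | ⟨h4, h5⟩
          · exact hne h5
          · rw [h5] at hts; exact absurd hts (lt_irrefl _)
        have hω1 : ω t s' < ω t s := nested_lt hbe hadj hadj' le_rfl hfs' h1 hne1
        have hω2 : ω t s < ω t s' := nested_lt hbe' hadj' hadj le_rfl hfs h2 hne2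
        linarith
      subst hss
      rw [leftSum_step hbe hvis hadj hts hsc hmax hout,
        leftSum_step hbe' hvis' hadj' hts' hsc' hmax' hout']
      have hcards : (univ.filter fun v => f s < f v).card ≤ k := by
        have hlt : (univ.filter fun v => f s < f v).card <
            (univ.filter fun v => f t < f v).card := by
          apply Finset.card_lt_card
          refine ⟨fun v hv => ?_, fun hsub => ?_⟩
          · simp only [mem_filter, mem_univ, true_and] at hv ⊢; exact hts.trans hv
          · have hsmem : s ∈ univ.filter fun v => f t < f v := by simp [hts]
            have := hsub hsmem
            simp at this
        omega
      rw [ih s hcards hsfs hsfs' hsc hsc2]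

lemma leftExt_eq_leftSum' (ω : V → V → ℝ) {x : V} (hmin : ∀ v, f x ≤ f v) :
    leftExt G ω f c = leftSum G ω f c x := by
  classical
  unfold leftExt leftSum
  refine Finset.sum_congr rfl fun p _ => ?_
  split_ifs with h1 h2 h2
  · rfl
  · exact absurd ⟨h1.1, h1.2.1, h1.2.2.1, hmin _, h1.2.2.2⟩ h2
  · exact absurd ⟨h2.1, h2.2.1, h2.2.2.1, h2.2.2.2.2⟩ h1
  · rfl

end Aux

section Final

open Finset

theorem leftExt_card_le {V : Type*} [Fintype V]
    (G : SimpleGraph V) (ω : V → V → ℝ)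
    (hconn : G.Connected) (c : V)
    (S : Finset (V ≃ Fin (Fintype.card V)))
    (hbe : ∀ σ ∈ S, IsSumBE G ω (coords σ))
    (hvis : ∀ σ ∈ S, Visible G (coords σ) c)
    (hpair : ∀ σ ∈ S, ∀ σ' ∈ S, σ ≠ σ' →
      leftExt G ω (coords σ) c ≠ leftExt G ω (coords σ') c) :
    S.card ≤ Fintype.card V := by
  classical
  have hVne : Nonempty V := hconn.nonempty
  have hn : 0 < Fintype.card V := Fintype.card_pos
  have key : ∀ σ ∈ S, ∀ σ' ∈ S,
      σ.symm ⟨0, hn⟩ = σ'.symm ⟨0, hn⟩ → σ = σ' := by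
    intro σ hσ σ' hσ' hx
    by_contra hne2
    apply hpair σ hσ σ' hσ' hne2
    set f : V → ℝ := coords σ with hf
    set f' : V → ℝ := coords σ' with hf'
    have hmin : ∀ v, f (σ.symm ⟨0, hn⟩) ≤ f v := by
      intro v
      show ((σ (σ.symm ⟨0, hn⟩) : ℕ) : ℝ) ≤ _
      rw [Equiv.apply_symm_apply]
      exact Nat.cast_le.mpr (Nat.zero_le _)
    have hmin' : ∀ v, f' (σ.symm ⟨0, hn⟩) ≤ f' v := by
      intro v
      show ((σ' (σ.symm ⟨0, hn⟩) : ℕ) : ℝ) ≤ _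
      rw [hx, Equiv.apply_symm_apply]
      exact Nat.cast_le.mpr (Nat.zero_le _)
    have hsf : SpanFree G f (σ.symm ⟨0, hn⟩) := fun a b _ h => absurd h.1 (not_lt.mpr (hmin a))
    have hsf' : SpanFree G f' (σ.symm ⟨0, hn⟩) := fun a b _ h => absurd h.1 (not_lt.mpr (hmin' a))
    rw [leftExt_eq_leftSum' ω hmin, leftExt_eq_leftSum' ω hmin']
    exact main_eq (hbe σ hσ) (hbe σ' hσ') (hvis σ hσ) (hvis σ' hσ') hconn
      (Fintype.card V) (σ.symm ⟨0, hn⟩)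
      (le_trans (Finset.card_filter_le _ _) (by simp))
      hsf hsf' (hmin c) (hmin' c)
  have : S.card ≤ (Finset.univ : Finset V).card := by
    refine Finset.card_le_card_of_injOn (fun σ => σ.symm ⟨0, hn⟩)
      (fun _ _ => Finset.mem_univ _) ?_
    intro σ hσ σ' hσ' heq
    exact key σ (by simpa using hσ) σ' (by simpa using hσ') heq
  simpa using this

end Final

/-- a family of sum-constrained book-embeddings of a connected weighted
graph in which `c` is visible and which are pairwise non-dominating and non-equivalent
with respect to `c` has at most `n` members. -/
theorem card_le_of_pairwise_lr_incomparable {V : Type*} [Fintype V]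
    (G : SimpleGraph V) (ω : V → V → ℝ)
    (hsym : ∀ u v, ω u v = ω v u)
    (hpos : ∀ u v, G.Adj u v → 0 < ω u v)
    (hconn : G.Connected) (c : V)
    (S : Finset (V ≃ Fin (Fintype.card V)))
    (hbe : ∀ σ ∈ S, IsSumBE G ω (coords σ))
    (hvis : ∀ σ ∈ S, Visible G (coords σ) c)
    (hpair : ∀ σ ∈ S, ∀ σ' ∈ S, σ ≠ σ' →
      ¬ LRDominates G ω (coords σ) (coords σ') c ∧
      ¬ LREquiv G ω (coords σ) (coords σ') c) :
    S.card ≤ Fintype.card V := by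
  refine leftExt_card_le G ω hconn c S hbe hvis ?_
  intro σ hσ σ' hσ' hne hL
  obtain ⟨hdom, heqv⟩ := hpair σ hσ σ' hσ' hne
  obtain ⟨hdom', heqv'⟩ := hpair σ' hσ' σ hσ (Ne.symm hne)
  rcases lt_trichotomy (rightExt G ω (coords σ) c) (rightExt G ω (coords σ') c) with h | h | h
  · exact hdom ⟨le_of_eq hL, h.le, Or.inr h⟩
  · exact heqv ⟨hL, h⟩
  · exact hdom' ⟨le_of_eq hL.symm, h.le, Or.inr h⟩

end Schematic
end

section
/- Let H = (V,E,ω) be a connected weighted graph with n ≥ 2 vertices and let ℓ ∈ V. Let S be a set of sum-constrained book-embeddings of H such that (1) every member of S has ℓ as its first vertex, and (2) for any two distinct members L, L' of S, L does not up-down dominate L' and L is not up-down equivalent to L'. Then S contains at most n embeddings. -/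
namespace Schematic

open Classical in
/-- The total extension of the restriction of a book-embedding to the vertex set `W`:
the sum of the weights of the edges with both endpoints in `W` around which no edge
with both endpoints in `W` wraps. -/
noncomputable def totalExtOn {V : Type*} [Fintype V] (G : SimpleGraph V)
    (ω : V → V → ℝ) (f : V → ℝ) (W : Set V) : ℝ :=
  ∑ p : V × V,
    if G.Adj p.1 p.2 ∧ p.1 ∈ W ∧ p.2 ∈ W ∧ f p.1 < f p.2 ∧
        ¬ ∃ w z : V, w ∈ W ∧ z ∈ W ∧ Wraps G f w z p.1 p.2
    then ω p.1 p.2 else 0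

/-- The total extension of a book-embedding: the sum of the weights of the outermost
edges. -/
noncomputable def totalExt {V : Type*} [Fintype V] (G : SimpleGraph V)
    (ω : V → V → ℝ) (f : V → ℝ) : ℝ :=
  totalExtOn G ω f Set.univ

/-- `α` is the free space of the book-embedding `f`: the weight of the lowest-right edge
`(u,v)` of the first vertex `u` minus the total extension of the restriction of the
embedding to `v` together with the vertices strictly between `u` and `v`. -/
def FreeSpaceIs {V : Type*} [Fintype V] (G : SimpleGraph V) (ω : V → V → ℝ)
    (f : V → ℝ) (α : ℝ) : Prop :=
  ∃ u v : V, (∀ w, f u ≤ f w) ∧ G.Adj u v ∧ (∀ w, G.Adj u w → f v ≤ f w) ∧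
    α = ω u v - totalExtOn G ω f {w | f u < f w ∧ f w ≤ f v}

/-- Two book-embeddings with the same first vertex are up-down equivalent if they have
the same total extension and the same free space. -/
def UpDownEquiv {V : Type*} [Fintype V] (G : SimpleGraph V) (ω : V → V → ℝ)
    (f f' : V → ℝ) : Prop :=
  totalExt G ω f = totalExt G ω f' ∧
  ∃ α : ℝ, FreeSpaceIs G ω f α ∧ FreeSpaceIs G ω f' α

/-- `f` up-down dominates `f'`. -/
def UpDownDominates {V : Type*} [Fintype V] (G : SimpleGraph V) (ω : V → V → ℝ)
    (f f' : V → ℝ) : Prop :=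
  ∃ α α' : ℝ, FreeSpaceIs G ω f α ∧ FreeSpaceIs G ω f' α' ∧
    totalExt G ω f ≤ totalExt G ω f' ∧ α' ≤ α ∧
    (totalExt G ω f < totalExt G ω f' ∨ α' < α)

/-!
In a 1-page book-embedding of a connected graph with first vertex `ℓ` and last vertex `r`, the
outermost edges form a path `ℓ = x₀ ≺ x₁ ≺ ⋯ ≺ x_K = r`, so the total extension is the weight of
that path. The outermost path of a second embedding with the same end vertices is a simple
`ℓ`–`r` path; in the first embedding it must run monotonically from left to right (a backward
step would force a crossing), so it splits into runs of non-overlapping edges, each nested under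
one outermost edge of the first embedding. If the first embedding is sum-constrained, each run
weighs at most that outermost edge. Hence two members of `S` with the same last vertex have the
same total extension, and then their free spaces make them comparable, so they coincide: the last
vertex determines the member of `S`.
-/

section

variable {V : Type*} {G : SimpleGraph V} {f : V → ℝ} {ω : V → V → ℝ}

def IsOuterEdge (G : SimpleGraph V) (f : V → ℝ) (u v : V) : Prop :=
  G.Adj u v ∧ f u < f v ∧ ¬ ∃ w z, Wraps G f w z u v

lemma exists_step_of_not {p : ℕ → Prop} {N : ℕ} (h0 : p 0) (hN : ¬ p N) :
    ∃ i < N, p i ∧ ¬ p (i + 1) := by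
  induction N with
  | zero => exact absurd h0 hN
  | succ N ih =>
    by_cases hp : p N
    · exact ⟨N, N.lt_succ_self, hp, hN⟩
    · obtain ⟨i, hi, hstep⟩ := ih hp
      exact ⟨i, hi.trans N.lt_succ_self, hstep⟩

lemma exists_adj_le_lt_of_connected (hc : G.Connected) (f : V → ℝ) {ℓ r : V} {t : ℝ}
    (hℓ : f ℓ ≤ t) (hr : t < f r) : ∃ a b, G.Adj a b ∧ f a ≤ t ∧ t < f b := by
  obtain ⟨w⟩ := hc.preconnected ℓ r
  obtain ⟨i, hi, hle, hlt⟩ := exists_step_of_not (p := fun i => f (w.getVert i) ≤ t)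
    (N := w.length) (by simpa using hℓ) (by simpa using hr)
  exact ⟨_, _, w.adj_getVert_succ hi, hle, not_le.1 hlt⟩

lemma exists_isOuterEdge_around [Fintype V] (hinj : Function.Injective f) {a b : V}
    (hab : G.Adj a b) (hlt : f a < f b) :
    ∃ u v, IsOuterEdge G f u v ∧ f u ≤ f a ∧ f b ≤ f v := by
  classical
  let s := Finset.univ.filter fun p : V × V => G.Adj p.1 p.2 ∧ f p.1 ≤ f a ∧ f b ≤ f p.2
  obtain ⟨⟨u, v⟩, hs, hmax⟩ :=
    s.exists_max_image (fun p => f p.2 - f p.1) ⟨(a, b), by simp [s, hab]⟩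
  simp only [s, Finset.mem_filter, Finset.mem_univ, true_and] at hs
  obtain ⟨huv, hua, hbv⟩ := hs
  refine ⟨u, v, ⟨huv, by linarith, ?_⟩, hua, hbv⟩
  rintro ⟨w, z, hwz, -, hne, hwu, -, hvz⟩
  have hspan : f z - f w ≤ f v - f u :=
    hmax (w, z) (by simp only [s, Finset.mem_filter, Finset.mem_univ, true_and]; exact
      ⟨hwz, hwu.trans hua, hbv.trans hvz⟩)
  apply hne
  rw [hinj (le_antisymm hwu (by linarith)), hinj (le_antisymm (by linarith) hvz)]

namespace IsBE

lemma le_of_isOuterEdge (hf : IsBE G f) {u v a b : V} (huv : IsOuterEdge G f u v)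
    (hab : G.Adj a b) (hua : f u ≤ f a) (hav : f a < f v) (hlt : f a < f b) : f b ≤ f v := by
  by_contra! hvb
  rcases hua.eq_or_lt with hua | hua
  · obtain rfl : u = a := hf.1 hua
    exact huv.2.2 ⟨u, b, hab, huv.1, fun h => hvb.ne' (congrArg f (Sym2.congr_right.1 h)),
      le_rfl, huv.2.1, hvb.le⟩
  · exact hf.2 u v a b huv.1 hab ⟨hua, hav, hvb⟩

lemma eq_of_isOuterEdge (hf : IsBE G f) {u v u' v' : V} (h : IsOuterEdge G f u v)
    (h' : IsOuterEdge G f u' v') (hu : f u ≤ f u') (hu' : f u' < f v) : u = u' ∧ v = v' := by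
  by_contra hne
  refine h'.2.2 ⟨u, v, h.1, h'.1, fun hs => ?_, hu, h'.2.1,
    hf.le_of_isOuterEdge h h'.1 hu hu' h'.2.1⟩
  rcases Sym2.eq_iff.1 hs with hs | ⟨rfl, rfl⟩
  · exact hne hs
  · exact lt_asymm h.2.1 h'.2.1

lemma exists_isOuterEdge_from [Fintype V] (hf : IsBE G f) (hc : G.Connected) {ℓ r x : V}
    (hℓ : ∀ w, f ℓ ≤ f w) (hx : x = ℓ ∨ ∃ u, IsOuterEdge G f u x) (hxr : f x < f r) :
    ∃ v, IsOuterEdge G f x v := by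
  obtain ⟨a, b, hab, hax, hxb⟩ := exists_adj_le_lt_of_connected hc f (hℓ x) hxr
  obtain ⟨u, v, huv, hua, hbv⟩ := exists_isOuterEdge_around hf.1 hab (hax.trans_lt hxb)
  have hxv : f x < f v := hxb.trans_le hbv
  suffices u = x from ⟨v, this ▸ huv⟩
  refine hf.1 (le_antisymm (hua.trans hax) ?_)
  rcases hx with rfl | ⟨u', hu'⟩
  · exact hℓ u
  · by_contra! hux
    rcases le_total (f u) (f u') with h | h
    · exact hxv.ne' (congrArg f (hf.eq_of_isOuterEdge huv hu' h (hu'.2.1.trans hxv)).2)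
    · exact hxv.ne (congrArg f (hf.eq_of_isOuterEdge hu' huv h hux).2)

lemma exists_spine [Fintype V] (hf : IsBE G f) (hc : G.Connected) {ℓ r : V}
    (hℓ : ∀ w, f ℓ ≤ f w) (hr : ∀ w, f w ≤ f r) :
    ∃ (K : ℕ) (x : ℕ → V), x 0 = ℓ ∧ x K = r ∧
      (∀ i < K, IsOuterEdge G f (x i) (x (i + 1))) ∧
      (∀ u v, IsOuterEdge G f u v → ∃ i < K, u = x i ∧ v = x (i + 1)) := by
  classical
  let next : V → V := fun y => if h : ∃ v, IsOuterEdge G f y v then h.choose else y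
  let x : ℕ → V := fun i => next^[i] ℓ
  have hx_succ (i : ℕ) : x (i + 1) = next (x i) := Function.iterate_succ_apply' next i ℓ
  have hnext (y : V) (h : ∃ v, IsOuterEdge G f y v) : IsOuterEdge G f y (next y) := by
    simpa only [next, dif_pos h] using h.choose_spec
  have hx_endpoint (i : ℕ) : x i = ℓ ∨ ∃ u, IsOuterEdge G f u (x i) := by
    induction i with
    | zero => exact Or.inl rfl
    | succ i ih =>
      by_cases h : ∃ v, IsOuterEdge G f (x i) v
      · exact Or.inr ⟨x i, hx_succ i ▸ hnext _ h⟩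
      · rwa [hx_succ, show next (x i) = x i from dif_neg h]
  have hstep (i : ℕ) (hi : x i ≠ r) : IsOuterEdge G f (x i) (x (i + 1)) :=
    hx_succ i ▸ hnext _ (hf.exists_isOuterEdge_from hc hℓ (hx_endpoint i)
      ((hr _).lt_of_ne fun h => hi (hf.1 h)))
  have hreach : ∃ K, x K = r := by
    by_contra! h
    have hmono : StrictMono (f ∘ x) := strictMono_nat_of_lt_succ fun i => (hstep i (h i)).2.1
    exact not_injective_infinite_finite x hmono.injective.of_comp
  obtain ⟨K, hK, hmin⟩ : ∃ K, x K = r ∧ ∀ i < K, x i ≠ r :=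
    ⟨Nat.find hreach, Nat.find_spec hreach, fun _ => Nat.find_min hreach⟩
  refine ⟨K, x, rfl, hK, fun i hi => hstep i (hmin i hi), fun u v huv => ?_⟩
  obtain ⟨i, hi, hxu, hux⟩ := exists_step_of_not (p := fun i => f (x i) ≤ f u) (N := K) (hℓ u)
    (by simpa [hK] using huv.2.1.trans_le (hr v))
  obtain ⟨rfl, rfl⟩ := hf.eq_of_isOuterEdge (hstep i (hmin i hi)) huv hxu (not_le.1 hux)
  exact ⟨i, hi, rfl, rfl⟩

lemma exists_eq_of_escape (hf : IsBE G f) {a b : V} (hab : G.Adj a b) {N : ℕ} {z : ℕ → V}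
    (hz : ∀ i < N, G.Adj (z i) (z (i + 1)))
    (h0 : f a < f (z 0) ∧ f (z 0) < f b) (hN : ¬ (f a < f (z N) ∧ f (z N) < f b)) :
    ∃ i ≤ N, z i = a ∨ z i = b := by
  obtain ⟨i, hi, ⟨hai, hib⟩, hout⟩ :=
    exists_step_of_not (p := fun i => f a < f (z i) ∧ f (z i) < f b) h0 hN
  refine ⟨i + 1, hi, ?_⟩
  by_contra! hne
  rw [not_and_or, not_lt, not_lt] at hout
  rcases hout with h | h
  · exact hf.2 (z (i + 1)) (z i) a b (hz i hi).symm hab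
      ⟨h.lt_of_ne fun h => hne.1 (hf.1 h), hai, hib⟩
  · exact hf.2 a b (z i) (z (i + 1)) hab (hz i hi)
      ⟨hai, hib, h.lt_of_ne' fun h => hne.2 (hf.1 h)⟩

lemma lt_succ_of_path (hf : IsBE G f) {ℓ r : V} (hℓ : ∀ w, f ℓ ≤ f w) (hr : ∀ w, f w ≤ f r)
    {N : ℕ} {z : ℕ → V} (h0 : z 0 = ℓ) (hN : z N = r) (hz : ∀ j < N, G.Adj (z j) (z (j + 1)))
    (hinj : Set.InjOn z (Set.Iic N)) (j : ℕ) (hj : j < N) : f (z j) < f (z (j + 1)) := by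
  have hne {i k : ℕ} (hi : i ≤ N) (hk : k ≤ N) (hik : i ≠ k) : f (z i) ≠ f (z k) :=
    fun h => hik (hinj hi hk (hf.1 h))
  refine lt_of_le_of_ne (le_of_not_gt fun hback => ?_)
    (hne (i := j) (k := j + 1) (by omega) (by omega) (by omega))
  obtain ⟨c, hc, hcz, hzc⟩ := exists_step_of_not (p := fun c => f (z c) ≤ f (z (j + 1)))
    (N := j) (h0 ▸ hℓ _) (not_le.2 hback)
  -- the rest of the path starts strictly inside the edge `(z c, z (c + 1))` and ends at `r`
  obtain ⟨k, hk, hzk⟩ := hf.exists_eq_of_escape (hz c (by omega)) (N := N - (j + 1))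
    (z := fun k => z (j + 1 + k)) (fun k hk => hz (j + 1 + k) (by omega))
    ⟨hcz.lt_of_ne (hne (i := c) (k := j + 1) (by omega) (by omega) (by omega)), not_le.1 hzc⟩
    (by simp [show j + 1 + (N - (j + 1)) = N by omega, hN, hr])
  rcases hzk with h | h <;>
    exact absurd (hinj (Set.mem_Iic.2 (by omega)) (Set.mem_Iic.2 (by omega)) h) (by omega)

end IsBE

lemma totalExt_eq_sum_of_spine [Fintype V] (ω : V → V → ℝ) {K : ℕ} {x : ℕ → V}
    (hx : ∀ i < K, IsOuterEdge G f (x i) (x (i + 1)))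
    (hall : ∀ u v, IsOuterEdge G f u v → ∃ i < K, u = x i ∧ v = x (i + 1)) :
    totalExt G ω f = ∑ i ∈ Finset.range K, ω (x i) (x (i + 1)) := by
  classical
  have hmono : StrictMonoOn (f ∘ x) (Set.Iic K) :=
    strictMonoOn_Iic_of_lt_succ fun i hi => (hx i hi).2.1
  have hset : Finset.univ.filter (fun p : V × V => IsOuterEdge G f p.1 p.2) =
      (Finset.range K).image fun i => (x i, x (i + 1)) := by
    ext ⟨u, v⟩
    simp only [Finset.mem_filter, Finset.mem_univ, true_and, Finset.mem_image,
      Finset.mem_range, Prod.mk.injEq]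
    constructor
    · intro h
      obtain ⟨i, hi, rfl, rfl⟩ := hall u v h
      exact ⟨i, hi, rfl, rfl⟩
    · rintro ⟨i, hi, rfl, rfl⟩
      exact hx i hi
  calc totalExt G ω f
      = ∑ p ∈ Finset.univ.filter (fun p : V × V => IsOuterEdge G f p.1 p.2), ω p.1 p.2 := by
        rw [Finset.sum_filter]
        simp [totalExt, totalExtOn, IsOuterEdge]
    _ = ∑ i ∈ Finset.range K, ω (x i) (x (i + 1)) := by
        refine hset ▸ Finset.sum_image fun i hi j hj hij => hmono.injOn (Finset.mem_range.1 hi).le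
          (Finset.mem_range.1 hj).le (congrArg (fun p : V × V => f p.1) hij)

namespace IsSumBE

variable {ι : Type*} [LinearOrder ι]

lemma sum_lt (hf : IsSumBE G ω f) {u v : V} (huv : G.Adj u v) (hlt : f u < f v)
    (T : Finset ι) (a b : ι → V) (hadj : ∀ j ∈ T, G.Adj (a j) (b j))
    (hne : ∀ j ∈ T, s(a j, b j) ≠ s(u, v)) (hua : ∀ j ∈ T, f u ≤ f (a j))
    (hab : ∀ j ∈ T, f (a j) < f (b j)) (hbv : ∀ j ∈ T, f (b j) ≤ f v)
    (hdisj : ∀ i ∈ T, ∀ j ∈ T, i < j → f (b i) ≤ f (a j)) :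
    ∑ j ∈ T, ω (a j) (b j) < ω u v := by
  let e := T.orderIsoOfFin rfl
  have key := hf.2 u v huv hlt T.card (fun k => a (e k)) (fun k => b (e k))
    (fun k => hadj _ (e k).2) (fun k => hne _ (e k).2) (fun k => hua _ (e k).2)
    (fun k => hab _ (e k).2) (fun k => hbv _ (e k).2)
    (fun k l hkl => hdisj _ (e k).2 _ (e l).2 (e.strictMono hkl))
  rwa [← Finset.sum_coe_sort T, ← e.toEquiv.sum_comp]

lemma sum_le (hf : IsSumBE G ω f) {u v : V} (huv : G.Adj u v) (hlt : f u < f v)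
    (T : Finset ι) (a b : ι → V) (hadj : ∀ j ∈ T, G.Adj (a j) (b j))
    (hua : ∀ j ∈ T, f u ≤ f (a j)) (hab : ∀ j ∈ T, f (a j) < f (b j))
    (hbv : ∀ j ∈ T, f (b j) ≤ f v) (hdisj : ∀ i ∈ T, ∀ j ∈ T, i < j → f (b i) ≤ f (a j)) :
    ∑ j ∈ T, ω (a j) (b j) ≤ ω u v := by
  by_cases h : ∃ j ∈ T, a j = u ∧ b j = v
  · obtain ⟨j, hj, rfl, rfl⟩ := h
    suffices T = {j} by rw [this, Finset.sum_singleton]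
    refine Finset.eq_singleton_iff_unique_mem.2 ⟨hj, fun i hi => ?_⟩
    by_contra hij
    have := hab i hi
    rcases lt_or_gt_of_ne hij with hlt' | hlt'
    · linarith [hdisj i hi j hj hlt', hua i hi]
    · linarith [hdisj j hj i hi hlt', hbv i hi]
  · refine (hf.sum_lt huv hlt T a b hadj (fun j hj hs => ?_) hua hab hbv hdisj).le
    rcases Sym2.eq_iff.1 hs with hs | ⟨h1, h2⟩
    · exact h ⟨j, hj, hs⟩
    · have := hab j hj
      rw [h1, h2] at this
      exact lt_asymm this hlt

end IsSumBE

lemma totalExt_le_of_isSumBE [Fintype V] {f' : V → ℝ} (hf : IsSumBE G ω f) (hf' : IsBE G f')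
    (hc : G.Connected) {ℓ r : V} (hℓ : ∀ w, f ℓ ≤ f w) (hr : ∀ w, f w ≤ f r)
    (hℓ' : ∀ w, f' ℓ ≤ f' w) (hr' : ∀ w, f' w ≤ f' r) :
    totalExt G ω f' ≤ totalExt G ω f := by
  classical
  obtain ⟨K, x, hx0, hxK, hx, hxall⟩ := hf.1.exists_spine hc hℓ hr
  obtain ⟨K', z, hz0, hzK, hz, hzall⟩ := hf'.exists_spine hc hℓ' hr'
  rw [totalExt_eq_sum_of_spine ω hx hxall, totalExt_eq_sum_of_spine ω hz hzall]
  have hzinj : Set.InjOn z (Set.Iic K') :=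
    (strictMonoOn_Iic_of_lt_succ (ψ := f' ∘ z) fun j hj => (hz j hj).2.1).injOn.of_comp
  have hzlt := hf.1.lt_succ_of_path hℓ hr hz0 hzK (fun j hj => (hz j hj).1) hzinj
  have hzmono : StrictMonoOn (f ∘ z) (Set.Iic K') := strictMonoOn_Iic_of_lt_succ hzlt
  have hunder (j : ℕ) : ∃ i, j < K' →
      i < K ∧ f (x i) ≤ f (z j) ∧ f (z (j + 1)) ≤ f (x (i + 1)) := by
    by_cases hj : j < K'
    · have hzr : f (z j) < f (x K) := hxK ▸ hzK ▸ hzmono hj.le (Set.mem_Iic.2 le_rfl) hj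
      obtain ⟨i, hi, hxz, hzx⟩ := exists_step_of_not (p := fun i => f (x i) ≤ f (z j))
        (hx0 ▸ hℓ _) (not_le.2 hzr)
      exact ⟨i, fun _ => ⟨hi, hxz,
        hf.1.le_of_isOuterEdge (hx i hi) (hz j hj).1 hxz (not_le.1 hzx) (hzlt j hj)⟩⟩
    · exact ⟨0, fun h => absurd h hj⟩
  choose φ hφ using hunder
  -- group the edges of the `f'`-spine by the `f`-spine edge `φ j` they lie under
  rw [← Finset.sum_fiberwise_of_maps_to (g := φ) (t := Finset.range K)
    fun j hj => Finset.mem_range.2 (hφ j (Finset.mem_range.1 hj)).1]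
  refine Finset.sum_le_sum fun i hi => ?_
  have hfib {j : ℕ} (hj : j ∈ (Finset.range K').filter (φ · = i)) : j < K' ∧ φ j = i := by
    simpa using hj
  have hxi := hx i (Finset.mem_range.1 hi)
  refine hf.sum_le hxi.1 hxi.2.1 _ z (fun j => z (j + 1)) (fun j hj => (hz j (hfib hj).1).1)
    (fun j hj => ?_) (fun j hj => hzlt j (hfib hj).1) (fun j hj => ?_)
    (fun j hj k hk hjk => hzmono.monotoneOn (hfib hj).1 (hfib hk).1.le hjk)
  · obtain ⟨hjK, rfl⟩ := hfib hj
    exact (hφ j hjK).2.1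
  · obtain ⟨hjK, rfl⟩ := hfib hj
    exact (hφ j hjK).2.2

lemma totalExt_eq_of_isSumBE [Fintype V] {f' : V → ℝ} (hf : IsSumBE G ω f)
    (hf' : IsSumBE G ω f') (hc : G.Connected) {ℓ r : V} (hℓ : ∀ w, f ℓ ≤ f w)
    (hr : ∀ w, f w ≤ f r) (hℓ' : ∀ w, f' ℓ ≤ f' w) (hr' : ∀ w, f' w ≤ f' r) :
    totalExt G ω f = totalExt G ω f' :=
  le_antisymm (totalExt_le_of_isSumBE hf' hf.1 hc hℓ' hr' hℓ hr)
    (totalExt_le_of_isSumBE hf hf'.1 hc hℓ hr hℓ' hr')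

lemma exists_freeSpaceIs [Fintype V] (hc : G.Connected) (hn : 2 ≤ Fintype.card V)
    (ω : V → V → ℝ) {ℓ : V} (hℓ : ∀ w, f ℓ ≤ f w) : ∃ α, FreeSpaceIs G ω f α := by
  classical
  obtain ⟨w, hw⟩ := Fintype.exists_ne_of_one_lt_card hn ℓ
  obtain ⟨v, hv⟩ := (hc.preconnected ℓ w).nonempty_neighborSet_left hw.symm
  obtain ⟨v, hv, hmin⟩ := (Finset.univ.filter (G.Adj ℓ)).exists_min_image f
    ⟨v, by simpa using hv⟩
  exact ⟨_, ℓ, v, hℓ, (Finset.mem_filter.1 hv).2, fun w hw => hmin w (by simpa using hw), rfl⟩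

lemma upDown_comparable_of_totalExt_eq [Fintype V] {f f' : V → ℝ} {α α' : ℝ}
    (hα : FreeSpaceIs G ω f α) (hα' : FreeSpaceIs G ω f' α')
    (hτ : totalExt G ω f = totalExt G ω f') :
    UpDownDominates G ω f f' ∨ UpDownDominates G ω f' f ∨ UpDownEquiv G ω f f' := by
  rcases lt_trichotomy α α' with h | rfl | h
  · exact Or.inr (Or.inl ⟨α', α, hα', hα, hτ.ge, h.le, Or.inr h⟩)
  · exact Or.inr (Or.inr ⟨hτ, α, hα, hα'⟩)
  · exact Or.inl ⟨α, α', hα, hα', hτ.le, h.le, Or.inr h⟩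

lemma coords_le_coords_last [Fintype V] (σ : V ≃ Fin (Fintype.card V))
    (h : 0 < Fintype.card V) (w : V) :
    coords σ w ≤ coords σ (σ.symm ⟨Fintype.card V - 1, Nat.sub_lt h one_pos⟩) := by
  simp only [coords, Equiv.apply_symm_apply]
  exact_mod_cast Nat.le_sub_one_of_lt (σ w).isLt

end

theorem card_le_of_pairwise_ud_incomparable_general {V : Type*} [Fintype V]
    (G : SimpleGraph V) (ω : V → V → ℝ)
    (hconn : G.Connected) (hn : 2 ≤ Fintype.card V) (ℓ : V)
    (S : Finset (V ≃ Fin (Fintype.card V)))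
    (hbe : ∀ σ ∈ S, IsSumBE G ω (coords σ))
    (hfirst : ∀ σ ∈ S, ∀ v : V, coords σ ℓ ≤ coords σ v)
    (hpair : ∀ σ ∈ S, ∀ σ' ∈ S, σ ≠ σ' →
      ¬ UpDownDominates G ω (coords σ) (coords σ') ∧
      ¬ UpDownEquiv G ω (coords σ) (coords σ')) :
    S.card ≤ Fintype.card V := by
  have hcard : 0 < Fintype.card V := by omega
  let last (σ : V ≃ Fin (Fintype.card V)) : V := σ.symm ⟨Fintype.card V - 1, by omega⟩
  have hlast (τ : V ≃ Fin (Fintype.card V)) (w : V) : coords τ w ≤ coords τ (last τ) :=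
    coords_le_coords_last τ hcard w
  have hinj : Set.InjOn last S := by
    intro σ hσ σ' hσ' hsame
    have hτ : totalExt G ω (coords σ) = totalExt G ω (coords σ') :=
      totalExt_eq_of_isSumBE (hbe σ hσ) (hbe σ' hσ') hconn (hfirst σ hσ) (hlast σ)
        (hfirst σ' hσ') (hsame ▸ hlast σ')
    by_contra hne
    obtain ⟨α, hα⟩ := exists_freeSpaceIs hconn hn ω (hfirst σ hσ)
    obtain ⟨α', hα'⟩ := exists_freeSpaceIs hconn hn ω (hfirst σ' hσ')
    rcases upDown_comparable_of_totalExt_eq hα hα' hτ with h | h | h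
    · exact (hpair σ hσ σ' hσ' hne).1 h
    · exact (hpair σ' hσ' σ hσ (Ne.symm hne)).1 h
    · exact (hpair σ hσ σ' hσ' hne).2 h
  simpa using Finset.card_le_card_of_injOn last (fun σ _ => Finset.mem_univ _) hinj

/-- a family of sum-constrained book-embeddings of a connected weighted
graph on `n ≥ 2` vertices, all with the same first vertex `ℓ`, which are pairwise
non-dominating and non-equivalent in the up-down sense, has at most `n` members. -/
theorem card_le_of_pairwise_ud_incomparable {V : Type*} [Fintype V]
    (G : SimpleGraph V) (ω : V → V → ℝ)
    (hsym : ∀ u v, ω u v = ω v u)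
    (hpos : ∀ u v, G.Adj u v → 0 < ω u v)
    (hconn : G.Connected) (hn : 2 ≤ Fintype.card V) (ℓ : V)
    (S : Finset (V ≃ Fin (Fintype.card V)))
    (hbe : ∀ σ ∈ S, IsSumBE G ω (coords σ))
    (hfirst : ∀ σ ∈ S, ∀ v : V, coords σ ℓ ≤ coords σ v)
    (hpair : ∀ σ ∈ S, ∀ σ' ∈ S, σ ≠ σ' →
      ¬ UpDownDominates G ω (coords σ) (coords σ') ∧
      ¬ UpDownEquiv G ω (coords σ) (coords σ')) :
    S.card ≤ Fintype.card V :=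
  card_le_of_pairwise_ud_incomparable_general G ω hconn hn ℓ S hbe hfirst hpair

end Schematic
end

section
/- Let H = (V,E,ω) be a connected weighted graph and let c, ℓ ∈ V. Then any two sum-constrained book-embeddings of H in which c is visible and in which ℓ is the first vertex have the same extension to the left of c. -/
/-!
The outermost edges lying left of `c` form a path `ℓ = x₀ ≺ x₁ ≺ ⋯ ≺ xₘ = c` whose vertices are
visible, so the left extension is the weight of this path. The corresponding path of a second
embedding is a simple path from `ℓ` to `c`; staying left of the visible vertex `c`, it is
monotone in the first embedding, so it passes through every `xⱼ`, and between `xⱼ` and `xⱼ₊₁` it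
runs beneath the edge `xⱼxⱼ₊₁`. The sum constraint bounds its weight by that of the first path,
and by symmetry the two extensions agree.
-/

namespace Schematic

section

variable {V : Type*} {G : SimpleGraph V} {f : V → ℝ}

theorem exists_boundary_index {P : ℕ → Prop} {n : ℕ} (h0 : P 0) (hn : ¬ P n) :
    ∃ k < n, P k ∧ ¬ P (k + 1) := by
  induction n with
  | zero => exact absurd h0 hn
  | succ n ih =>
    by_cases h : P n
    · exact ⟨n, n.lt_succ_self, h, hn⟩
    · obtain ⟨k, hk, hPk, hPk1⟩ := ih h
      exact ⟨k, by omega, hPk, hPk1⟩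

theorem visible_of_forall_le {ℓ : V} (hℓ : ∀ v, f ℓ ≤ f v) : Visible G f ℓ :=
  fun ⟨u, _, _, hu, _⟩ => (hℓ u).not_gt hu

theorem exists_eq_of_visible (hinj : Function.Injective f) {y : ℕ → V} {n : ℕ}
    (hadj : ∀ i < n, G.Adj (y i) (y (i + 1))) {t : V} (ht : Visible G f t)
    (h0 : f (y 0) ≤ f t) (hn : f t < f (y n)) : ∃ i < n, y i = t := by
  obtain ⟨i, hi, hle, hlt⟩ :=
    exists_boundary_index (P := fun i => f (y i) ≤ f t) h0 (not_le.2 hn)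
  exact ⟨i, hi, hinj (hle.antisymm (not_lt.1 fun h => ht ⟨_, _, hadj i hi, h, not_le.1 hlt⟩))⟩

theorem le_of_path_to_visible (hinj : Function.Injective f) {c : V} (hc : Visible G f c)
    {y : ℕ → V} {n : ℕ} (hadj : ∀ i < n, G.Adj (y i) (y (i + 1)))
    (hne : ∀ i < n, y i ≠ c) (h0 : f (y 0) ≤ f c) : ∀ i ≤ n, f (y i) ≤ f c := by
  intro i hi
  induction i with
  | zero => exact h0
  | succ i ih =>
    have hlt : f (y i) < f c := (ih (by omega)).lt_of_ne fun h => hne i (by omega) (hinj h)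
    exact not_lt.1 fun h => hc ⟨_, _, hadj i (by omega), hlt, h⟩

theorem strictMonoOn_of_path (hbe : IsBE G f) {y : ℕ → V} {n : ℕ}
    (hinj : Set.InjOn y (Set.Iic n)) (hadj : ∀ i < n, G.Adj (y i) (y (i + 1)))
    (hfirst : ∀ i ≤ n, f (y 0) ≤ f (y i)) (hlast : ∀ i ≤ n, f (y i) ≤ f (y n)) :
    StrictMonoOn (f ∘ y) (Set.Iic n) := by
  refine strictMonoOn_Iic_of_lt_succ fun i hi => ?_
  induction n generalizing i with
  | zero => omega
  | succ n ih =>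
    have hne : ∀ i ≤ n + 1, ∀ j ≤ n + 1, i ≠ j → f (y i) ≠ f (y j) :=
      fun i hi j hj hij h => hij (hinj (Set.mem_Iic.2 hi) (Set.mem_Iic.2 hj) (hbe.1 h))
    by_cases hmax : ∀ i ≤ n, f (y i) ≤ f (y n)
    · rcases Nat.lt_succ_iff_lt_or_eq.1 hi with hi | rfl
      · exact ih (hinj.mono (Set.Iic_subset_Iic.2 n.le_succ)) (fun j hj => hadj j (by omega))
          (fun j hj => hfirst j (by omega)) hmax i hi
      · exact (hlast i (by omega)).lt_of_ne (hne _ (by omega) _ le_rfl (by omega))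
    · -- some `y k` with `k < n` lies right of `y n`; the step by which the path first passes
      -- `y n` before reaching `y k` crosses the edge `(y n, y (n + 1))`
      push Not at hmax
      obtain ⟨k, hk, hnk⟩ := hmax
      have hkn : k ≠ n := by rintro rfl; exact lt_irrefl _ hnk
      have hn0 : n ≠ 0 := by omega
      obtain ⟨j, hjk, hj, hj1⟩ := exists_boundary_index (P := fun j => f (y j) < f (y n))
        ((hfirst n (by omega)).lt_of_ne (hne 0 (by omega) n (by omega) (Ne.symm hn0)))
        (not_lt.2 hnk.le)
      refine (hbe.2 _ _ _ _ (hadj j (by omega)) (hadj n (by omega))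
        ⟨hj, (not_lt.1 hj1).lt_of_ne (hne n (by omega) _ (by omega) (by omega)),
          (hlast _ (by omega)).lt_of_ne (hne _ (by omega) _ le_rfl (by omega))⟩).elim

def IsOutermost (G : SimpleGraph V) (f : V → ℝ) (u v : V) : Prop :=
  G.Adj u v ∧ f u < f v ∧ ¬ ∃ w z : V, Wraps G f w z u v

theorem IsOutermost.visible_right (hbe : IsBE G f) {u v : V} (h : IsOutermost G f u v) :
    Visible G f v := by
  rintro ⟨a, b, hab, hav, hvb⟩
  rcases le_or_gt (f a) (f u) with hau | hua
  · refine h.2.2 ⟨a, b, hab, h.1, ?_, hau, h.2.1, hvb.le⟩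
    rw [Ne, Sym2.eq_iff]
    rintro (⟨-, rfl⟩ | ⟨-, rfl⟩) <;> linarith [h.2.1]
  · exact hbe.2 u v a b h.1 hab ⟨hua, hav, hvb⟩

theorem IsOutermost.eq_of_le_of_lt (hbe : IsBE G f) {u v u' v' : V}
    (h : IsOutermost G f u v) (h' : IsOutermost G f u' v') (hu : f u ≤ f u') (hv : f u' < f v) :
    u = u' ∧ v = v' := by
  rcases le_or_gt (f v') (f v) with hv' | hv'
  · by_contra hne
    refine h'.2.2 ⟨u, v, h.1, h'.1, ?_, hu, h'.2.1, hv'⟩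
    rw [Ne, Sym2.eq_iff]
    rintro (huv | ⟨rfl, rfl⟩)
    · exact hne huv
    · linarith [h'.2.1]
  · rcases hu.lt_or_eq with hu | hu
    · exact (hbe.2 u v u' v' h.1 h'.1 ⟨hu, hv, hv'⟩).elim
    · obtain rfl := hbe.1 hu
      refine (h.2.2 ⟨u, v', h'.1, h.1, ?_, le_rfl, h.2.1, hv'.le⟩).elim
      rw [Ne, Sym2.eq_iff]
      rintro (⟨-, rfl⟩ | ⟨-, rfl⟩) <;> linarith [h.2.1]

/-- Among the edges spanning `t`, one of maximal length is outermost. -/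
theorem exists_isOutermost_of_adj [Fintype V] (hbe : IsBE G f) {t : ℝ} {a b : V}
    (hab : G.Adj a b) (ha : f a ≤ t) (hb : t < f b) :
    ∃ u v, IsOutermost G f u v ∧ f u ≤ t ∧ t < f v := by
  classical
  obtain ⟨⟨u, v⟩, hmem, hmax⟩ :=
    (Finset.univ.filter fun p : V × V => G.Adj p.1 p.2 ∧ f p.1 ≤ t ∧ t < f p.2).exists_max_image
      (fun p => f p.2 - f p.1) ⟨(a, b), by simp [hab, ha, hb]⟩
  simp only [Finset.mem_filter, Finset.mem_univ, true_and, Prod.forall] at hmem hmax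
  obtain ⟨huv, hu, hv⟩ := hmem
  refine ⟨u, v, ⟨huv, by linarith, ?_⟩, hu, hv⟩
  rintro ⟨w, z, hwz, -, hne, hwu, -, hvz⟩
  have hlen := hmax w z ⟨hwz, by linarith, by linarith⟩
  rw [hbe.1 (by linarith : f w = f u), hbe.1 (by linarith : f z = f v)] at hne
  exact hne rfl

theorem exists_isOutermost_of_visible [Fintype V] (hbe : IsBE G f) (hconn : G.Connected)
    {c u : V} (hc : Visible G f c) (hu : Visible G f u) (huc : f u < f c) :
    ∃ v, IsOutermost G f u v ∧ f v ≤ f c := by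
  obtain ⟨W⟩ := hconn.preconnected u c
  obtain ⟨d, -, hd, hd'⟩ := W.exists_boundary_dart {w | f w ≤ f u} (le_refl (f u)) (not_le.2 huc)
  obtain ⟨a, v, hav, ha, hv⟩ := exists_isOutermost_of_adj hbe d.adj hd (not_le.1 hd')
  obtain rfl : a = u := hbe.1 (ha.antisymm (not_lt.1 fun h => hu ⟨a, v, hav.1, h, hv⟩))
  exact ⟨v, hav, not_lt.1 fun h => hc ⟨a, v, hav.1, huc, h⟩⟩

theorem exists_outermost_chain [Fintype V] (hbe : IsBE G f) (hconn : G.Connected)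
    {c u : V} (hc : Visible G f c) (hu : Visible G f u) (huc : f u ≤ f c) :
    ∃ (m : ℕ) (x : ℕ → V), x 0 = u ∧ x m = c ∧ ∀ j < m, IsOutermost G f (x j) (x (j + 1)) := by
  rcases huc.lt_or_eq with huc | huc
  · obtain ⟨v, huv, hvc⟩ := exists_isOutermost_of_visible hbe hconn hc hu huc
    obtain ⟨m, x, hx0, hxm, hx⟩ :=
      exists_outermost_chain hbe hconn hc (huv.visible_right hbe) hvc
    refine ⟨m + 1, fun | 0 => u | j + 1 => x j, rfl, hxm, ?_⟩
    rintro (_ | j) hj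
    · simpa [hx0] using huv
    · exact hx j (by omega)
  · exact ⟨0, fun _ => u, rfl, hbe.1 huc, by simp⟩
termination_by (Finset.univ.filter fun w => f u < f w).card
decreasing_by
  refine Finset.card_lt_card ((Finset.ssubset_iff_of_subset fun w hw => ?_).2 ⟨v, ?_, ?_⟩)
  · simp only [Finset.mem_filter, Finset.mem_univ, true_and] at hw ⊢
    exact huv.2.1.trans hw
  · simpa using huv.2.1
  · simp

section Chain

variable {x : ℕ → V} {m : ℕ}

theorem strictMonoOn_of_isOutermost (hx : ∀ j < m, IsOutermost G f (x j) (x (j + 1))) :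
    StrictMonoOn (f ∘ x) (Set.Iic m) :=
  strictMonoOn_Iic_of_lt_succ fun j hj => (hx j hj).2.1

theorem visible_of_isOutermost (hbe : IsBE G f) (h0 : Visible G f (x 0))
    (hx : ∀ j < m, IsOutermost G f (x j) (x (j + 1))) : ∀ j ≤ m, Visible G f (x j)
  | 0, _ => h0
  | j + 1, hj => (hx j (by omega)).visible_right hbe

theorem leftExt_eq_sum [Fintype V] (ω : V → V → ℝ) (hbe : IsBE G f) {ℓ c : V}
    (hℓ : ∀ v, f ℓ ≤ f v) (hx0 : x 0 = ℓ) (hxm : x m = c)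
    (hx : ∀ j < m, IsOutermost G f (x j) (x (j + 1))) :
    leftExt G ω f c = ∑ j ∈ Finset.range m, ω (x j) (x (j + 1)) := by
  classical
  have hmono := strictMonoOn_of_isOutermost hx
  have hedges : ∀ u v : V, (G.Adj u v ∧ f u < f v ∧ f v ≤ f c ∧
      ¬ ∃ w z : V, Wraps G f w z u v) ↔ ∃ j < m, x j = u ∧ x (j + 1) = v := by
    intro u v
    constructor
    · rintro ⟨huv, hlt, hvc, hnw⟩
      obtain ⟨j, hj, hju, hju'⟩ := exists_boundary_index (P := fun j => f (x j) ≤ f u)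
        (hx0 ▸ hℓ u) (by rw [hxm]; linarith)
      exact ⟨j, hj, (hx j hj).eq_of_le_of_lt hbe ⟨huv, hlt, hnw⟩ hju (not_le.1 hju')⟩
    · rintro ⟨j, hj, rfl, rfl⟩
      obtain ⟨hadj, hlt, hnw⟩ := hx j hj
      exact ⟨hadj, hlt, hxm ▸ hmono.monotoneOn (Set.mem_Iic.2 (by omega)) (Set.mem_Iic.2 le_rfl)
        (by omega), hnw⟩
  unfold leftExt
  rw [← Finset.sum_filter]
  have himage : Finset.univ.filter (fun p : V × V => G.Adj p.1 p.2 ∧ f p.1 < f p.2 ∧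
      f p.2 ≤ f c ∧ ¬ ∃ w z : V, Wraps G f w z p.1 p.2) =
      (Finset.range m).image fun j => (x j, x (j + 1)) := by
    ext ⟨u, v⟩
    simpa only [Finset.mem_filter, Finset.mem_univ, true_and, Finset.mem_image,
      Finset.mem_range, Prod.mk.injEq] using hedges u v
  rw [himage, Finset.sum_image]
  intro i hi j hj hij
  exact hmono.injOn (Set.mem_Iic.2 (Finset.mem_range.1 hi).le)
    (Set.mem_Iic.2 (Finset.mem_range.1 hj).le) (congrArg (f ∘ Prod.fst) hij)

end Chain

theorem sum_Ico_le_of_adj {ω : V → V → ℝ} (hf : IsSumBE G ω f) {y : ℕ → V} {a b : ℕ}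
    (hab : a < b) (hmono : StrictMonoOn (f ∘ y) (Set.Icc a b))
    (hadj : ∀ i ∈ Finset.Ico a b, G.Adj (y i) (y (i + 1))) (hyab : G.Adj (y a) (y b)) :
    ∑ i ∈ Finset.Ico a b, ω (y i) (y (i + 1)) ≤ ω (y a) (y b) := by
  rcases (Nat.succ_le_of_lt hab).eq_or_lt with rfl | hab'
  · simp
  have hmem : ∀ i < b - a, a + i ∈ Set.Icc a b ∧ a + i + 1 ∈ Set.Icc a b :=
    fun i hi => ⟨⟨by omega, by omega⟩, ⟨by omega, by omega⟩⟩
  have hinj : Set.InjOn y (Set.Icc a b) :=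
    fun i hi j hj h => hmono.injOn hi hj (congrArg f h)
  have hle : ∀ i ∈ Set.Icc a b, ∀ j ∈ Set.Icc a b, i ≤ j → f (y i) ≤ f (y j) :=
    fun i hi j hj => hmono.monotoneOn hi hj
  rw [Finset.sum_Ico_eq_sum_range, ← Fin.sum_univ_eq_sum_range]
  refine (hf.2 (y a) (y b) hyab (hmono (Set.left_mem_Icc.2 hab.le) (Set.right_mem_Icc.2 hab.le)
    hab) (b - a) (fun i => y (a + i)) (fun i => y (a + i + 1)) (fun i => hadj _ ?_)
    (fun i => ?_) (fun i => ?_) (fun i => ?_) (fun i => ?_) (fun i j hij => ?_)).le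
  · exact Finset.mem_Ico.2 ⟨by omega, by omega⟩
  · obtain ⟨hi, hi'⟩ := hmem i i.2
    rw [Ne, Sym2.eq_iff]
    rintro (⟨h, h'⟩ | ⟨h, -⟩)
    · have := hinj hi (Set.left_mem_Icc.2 hab.le) h
      have := hinj hi' (Set.right_mem_Icc.2 hab.le) h'
      omega
    · have := hinj hi (Set.right_mem_Icc.2 hab.le) h
      omega
  · exact hle _ (Set.left_mem_Icc.2 hab.le) _ (hmem i i.2).1 (by omega)
  · exact hmono (hmem i i.2).1 (hmem i i.2).2 (by omega)
  · exact hle _ (hmem i i.2).2 _ (Set.right_mem_Icc.2 hab.le) (by omega)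
  · exact hle _ (hmem i i.2).2 _ (hmem j j.2).1 (by have : (i : ℕ) < j := hij; omega)

/-- The path `y` passes through every visible vertex `x j`, and between two consecutive ones it
runs beneath the edge joining them. -/
theorem sum_range_le_of_visible {ω : V → V → ℝ} (hf : IsSumBE G ω f) {x : ℕ → V} {m : ℕ}
    (hxadj : ∀ j < m, G.Adj (x j) (x (j + 1))) (hxvis : ∀ j ≤ m, Visible G f (x j))
    (hxmono : StrictMonoOn (f ∘ x) (Set.Iic m)) {y : ℕ → V} {n : ℕ}
    (hyadj : ∀ i < n, G.Adj (y i) (y (i + 1))) (hymono : StrictMonoOn (f ∘ y) (Set.Iic n))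
    (h0 : y 0 = x 0) (hn : y n = x m) :
    ∑ i ∈ Finset.range n, ω (y i) (y (i + 1)) ≤ ∑ j ∈ Finset.range m, ω (x j) (x (j + 1)) := by
  induction m generalizing n with
  | zero =>
    obtain rfl : n = 0 := by
      by_contra hn0
      have := hymono (Set.mem_Iic.2 (Nat.zero_le n)) (Set.mem_Iic.2 le_rfl) (Nat.pos_of_ne_zero hn0)
      simp [h0, hn] at this
    simp
  | succ m ih =>
    have hxm : f (x 0) ≤ f (x m) :=
      hxmono.monotoneOn (Set.mem_Iic.2 (Nat.zero_le _)) (Set.mem_Iic.2 m.le_succ) (Nat.zero_le _)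
    have hxm' : f (x m) < f (x (m + 1)) :=
      hxmono (Set.mem_Iic.2 m.le_succ) (Set.mem_Iic.2 le_rfl) m.lt_succ_self
    obtain ⟨i, hin, hyi⟩ := exists_eq_of_visible hf.1.1 hyadj (hxvis m m.le_succ)
      (h0 ▸ hxm) (hn ▸ hxm')
    rw [← Finset.sum_range_add_sum_Ico _ hin.le, Finset.sum_range_succ]
    refine add_le_add (ih (fun j hj => hxadj j (by omega)) (fun j hj => hxvis j (by omega))
      (hxmono.mono (Set.Iic_subset_Iic.2 m.le_succ)) (fun k hk => hyadj k (by omega))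
      (hymono.mono (Set.Iic_subset_Iic.2 hin.le)) hyi) ?_
    rw [← hyi, ← hn]
    exact sum_Ico_le_of_adj hf hin (hymono.mono Set.Icc_subset_Iic_self)
      (fun k hk => hyadj k (Finset.mem_Ico.1 hk).2) (by rw [hyi, hn]; exact hxadj m m.lt_succ_self)

theorem leftExt_le_leftExt [Fintype V] {ω : V → V → ℝ} {f' : V → ℝ} (hf : IsSumBE G ω f)
    (hbe' : IsBE G f') (hconn : G.Connected) {c ℓ : V} (hc : Visible G f c)
    (hc' : Visible G f' c) (hℓ : ∀ v, f ℓ ≤ f v) (hℓ' : ∀ v, f' ℓ ≤ f' v) :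
    leftExt G ω f' c ≤ leftExt G ω f c := by
  obtain ⟨m, x, hx0, hxm, hx⟩ :=
    exists_outermost_chain hf.1 hconn hc (visible_of_forall_le hℓ) (hℓ c)
  obtain ⟨n, y, hy0, hyn, hy⟩ :=
    exists_outermost_chain hbe' hconn hc' (visible_of_forall_le hℓ') (hℓ' c)
  rw [leftExt_eq_sum ω hf.1 hℓ hx0 hxm hx, leftExt_eq_sum ω hbe' hℓ' hy0 hyn hy]
  have hyadj : ∀ i < n, G.Adj (y i) (y (i + 1)) := fun i hi => (hy i hi).1
  have hyinj : Set.InjOn y (Set.Iic n) :=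
    fun i hi j hj h => (strictMonoOn_of_isOutermost hy).injOn hi hj (congrArg f' h)
  have hyne : ∀ i < n, y i ≠ c := fun i hi h =>
    hi.ne (hyinj (Set.mem_Iic.2 hi.le) (Set.mem_Iic.2 le_rfl) (h.trans hyn.symm))
  have hyc : ∀ i ≤ n, f (y i) ≤ f (y n) :=
    hyn ▸ le_of_path_to_visible hf.1.1 hc hyadj hyne (hy0 ▸ hℓ c)
  exact sum_range_le_of_visible hf (fun j hj => (hx j hj).1)
    (visible_of_isOutermost hf.1 (hx0 ▸ visible_of_forall_le hℓ) hx)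
    (strictMonoOn_of_isOutermost hx) hyadj
    (strictMonoOn_of_path hf.1 hyinj hyadj (fun i _ => hy0 ▸ hℓ _) hyc)
    (hy0.trans hx0.symm) (hyn.trans hxm.symm)

end

theorem leftExt_unique_general {V : Type*} [Fintype V]
    (G : SimpleGraph V) (ω : V → V → ℝ)
    (hconn : G.Connected) (c ℓ : V)
    (f f' : V → ℝ) (hf : IsSumBE G ω f) (hf' : IsSumBE G ω f')
    (hvis : Visible G f c) (hvis' : Visible G f' c)
    (hfirst : ∀ v, f ℓ ≤ f v) (hfirst' : ∀ v, f' ℓ ≤ f' v) :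
    leftExt G ω f c = leftExt G ω f' c :=
  le_antisymm (leftExt_le_leftExt hf' hf.1 hconn hvis' hvis hfirst' hfirst)
    (leftExt_le_leftExt hf hf'.1 hconn hvis hvis' hfirst hfirst')

/-- any two sum-constrained book-embeddings of a connected weighted graph
in which `c` is visible and `ℓ` is the first vertex have the same extension to the
left of `c`. -/
theorem leftExt_unique {V : Type*} [Fintype V]
    (G : SimpleGraph V) (ω : V → V → ℝ)
    (hsym : ∀ u v, ω u v = ω v u)
    (hpos : ∀ u v, G.Adj u v → 0 < ω u v)
    (hconn : G.Connected) (c ℓ : V)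
    (f f' : V → ℝ) (hf : IsSumBE G ω f) (hf' : IsSumBE G ω f')
    (hvis : Visible G f c) (hvis' : Visible G f' c)
    (hfirst : ∀ v, f ℓ ≤ f v) (hfirst' : ∀ v, f' ℓ ≤ f' v) :
    leftExt G ω f c = leftExt G ω f' c :=
  leftExt_unique_general G ω hconn c ℓ f f' hf hf' hvis hvis' hfirst hfirst'

end Schematic
end

section
/- Let Γ be a two-dimensional book-embedding of a weighted graph G = (V,E,ω) and let e = (u,v) with u ≺ v be an edge of G. Let ℓ be the vertical segment joining (x(u),y_min(e)) to (x(u),0) and let r be the vertical segment joining (x(v),y_min(e)) to (x(v),0). Then for every edge e' ∈ E, the segments ℓ and r contain no interior point of the rectangle R(e'). -/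
namespace Schematic

/-- A two-dimensional book-embedding of a weighted graph: a supporting 1-page
book-embedding given by the x-coordinates `x`, and for each edge `(u,v)` with `u ≺ v`
a rectangle `[x u, x v] × [ylo u v, yhi u v]` with `ylo u v ≥ 0`, area equal to the
weight of the edge, and `ylo u v` equal to the maximum of `yhi` over the edges nested
into `(u,v)` (`0` if there is no such edge). -/
def IsTwoDimBE {V : Type*} (G : SimpleGraph V) (ω : V → V → ℝ)
    (x : V → ℝ) (ylo yhi : V → V → ℝ) : Prop :=
  IsBE G x ∧
  (∀ u v : V, ylo u v = ylo v u) ∧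
  (∀ u v : V, yhi u v = yhi v u) ∧
  (∀ u v : V, G.Adj u v → 0 ≤ ylo u v) ∧
  (∀ u v : V, G.Adj u v → x u < x v →
    (x v - x u) * (yhi u v - ylo u v) = ω u v) ∧
  (∀ u v : V, G.Adj u v → x u < x v →
    (∀ w z : V, Wraps G x u v w z → yhi w z ≤ ylo u v) ∧
    ((∃ w z : V, Wraps G x u v w z ∧ ylo u v = yhi w z) ∨
     ((¬ ∃ w z : V, Wraps G x u v w z) ∧ ylo u v = 0)))

/-- for any edge `(u,v)` of a two-dimensional book-embedding, the vertical
segments joining `(x u, ylo u v)` to `(x u, 0)` and `(x v, ylo u v)` to `(x v, 0)`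
contain no interior point of the rectangle of any edge. -/
theorem connecting_segments_avoid_rectangles {V : Type*} [Fintype V]
    (G : SimpleGraph V) (ω : V → V → ℝ)
    (hsym : ∀ u v, ω u v = ω v u)
    (hpos : ∀ u v, G.Adj u v → 0 < ω u v)
    (x : V → ℝ) (ylo yhi : V → V → ℝ)
    (h2d : IsTwoDimBE G ω x ylo yhi)
    (u v : V) (huv : G.Adj u v) (ho : x u < x v)
    (w z : V) (hwz : G.Adj w z) (how : x w < x z) :
    ((({x u} : Set ℝ) ×ˢ Set.Icc (0 : ℝ) (ylo u v)) ∪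
        (({x v} : Set ℝ) ×ˢ Set.Icc (0 : ℝ) (ylo u v))) ∩
      (Set.Ioo (x w) (x z) ×ˢ Set.Ioo (ylo w z) (yhi w z)) = ∅ := by
  obtain ⟨⟨hinj, hcross⟩, hylos, hyhis, hylonn, harea, hnest⟩ := h2d
  have hlt : ylo u v < yhi u v := by
    have h1 := harea u v huv ho
    have h2 := hpos u v huv
    nlinarith
  ext p
  simp only [Set.mem_inter_iff, Set.mem_union, Set.mem_prod, Set.mem_singleton_iff,
    Set.mem_Icc, Set.mem_Ioo, Set.mem_empty_iff_false, iff_false]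
  rintro ⟨h1 | h1, ⟨hx1, hx2⟩, hy1, hy2⟩
  · -- p.1 = x u
    have hwu : x w < x u := h1.1 ▸ hx1
    have huz : x u < x z := h1.1 ▸ hx2
    have hvz : x v ≤ x z := by
      by_contra hc
      exact hcross w z u v hwz huv ⟨hwu, huz, lt_of_not_ge hc⟩
    have hne : s(w, z) ≠ s(u, v) := by
      intro h
      rw [Sym2.eq_iff] at h
      rcases h with ⟨h1, h2⟩ | ⟨h1, h2⟩
      · rw [h1] at hwu; linarith
      · rw [h1, h2] at how; linarith
    have := (hnest w z hwz how).1 u v ⟨hwz, huv, hne, le_of_lt hwu, ho, hvz⟩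
    linarith [h1.2.2]
  · -- p.1 = x v
    have hwv : x w < x v := h1.1 ▸ hx1
    have hvz : x v < x z := h1.1 ▸ hx2
    have huw : x w ≤ x u := by
      by_contra hc
      exact hcross u v w z huv hwz ⟨lt_of_not_ge hc, hwv, hvz⟩
    have hne : s(w, z) ≠ s(u, v) := by
      intro h
      rw [Sym2.eq_iff] at h
      rcases h with ⟨h1, h2⟩ | ⟨h1, h2⟩
      · rw [h2] at hvz; linarith
      · rw [h1] at hwv; linarith
    have := (hnest w z hwz how).1 u v ⟨hwz, huv, hne, huw, ho, le_of_lt hvz⟩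
    linarith [h1.2.2]

end Schematic
end

section
/- Let Γ be a two-dimensional book-embedding of a biconnected weighted graph G = (V,E,ω) whose area (the area of the bounding box of the union of the rectangles R(e)) equals Σ_{e∈E} ω(e). Say that an edge e1 directly wraps around an edge e2 in the supporting book-embedding L if e1 wraps around e2 and there is no edge e3 with e1 wrapping around e3 and e3 wrapping around e2. Then for every edge e ∈ E, if e_1, …, e_k are the edges that e directly wraps around, we have y_min(e) = y_max(e_1) = ⋯ = y_max(e_k). -/
namespace Schematic

open Classical in
/-- The sum of the weights of all edges of `G` (each unordered edge counted once,
in its `f`-increasing orientation). -/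
noncomputable def totalWeight {V : Type*} [Fintype V] (G : SimpleGraph V)
    (ω : V → V → ℝ) (f : V → ℝ) : ℝ :=
  ∑ p : V × V, if G.Adj p.1 p.2 ∧ f p.1 < f p.2 then ω p.1 p.2 else 0

/-- `[X₁,X₂] × [Y₁,Y₂]` is the bounding box of the two-dimensional book-embedding:
the smallest axis-parallel rectangle containing all the rectangles of the edges. -/
def IsBoundingBox {V : Type*} (G : SimpleGraph V) (x : V → ℝ) (ylo yhi : V → V → ℝ)
    (X₁ X₂ Y₁ Y₂ : ℝ) : Prop :=
  (∀ u v : V, G.Adj u v → x u < x v →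
    X₁ ≤ x u ∧ x v ≤ X₂ ∧ Y₁ ≤ ylo u v ∧ yhi u v ≤ Y₂) ∧
  (∃ u v : V, G.Adj u v ∧ x u < x v ∧ x u = X₁) ∧
  (∃ u v : V, G.Adj u v ∧ x u < x v ∧ x v = X₂) ∧
  (∃ u v : V, G.Adj u v ∧ x u < x v ∧ ylo u v = Y₁) ∧
  (∃ u v : V, G.Adj u v ∧ x u < x v ∧ yhi u v = Y₂)

/-- Edge `(u,v)` directly wraps around edge `(w,z)`. -/
def DirectlyWraps {V : Type*} (G : SimpleGraph V) (x : V → ℝ) (u v w z : V) : Prop :=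
  Wraps G x u v w z ∧ ¬ ∃ p q : V, Wraps G x u v p q ∧ Wraps G x p q w z

/-
The open rectangles of distinct edges are pairwise disjoint: either their x-ranges are
interior-disjoint, or, the supporting book-embedding being non-crossing, one edge wraps around
the other and then its rectangle lies on top of the other one. If an edge `(u,v)` directly wraps
around `(w,z)` but `ylo u v > yhi w z`, the open box `(x w, x z) × (yhi w z, ylo u v)` meets no
rectangle: an edge whose rectangle reached into it would wrap around `(w,z)` and, by directness,
would have to wrap around `(u,v)` or be `(u,v)`, which puts it above the box. This box of positive
area lies in the bounding box next to the edge rectangles, whose areas already add up to the area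
of the bounding box.
-/

end Schematic

open MeasureTheory Set

theorem MeasureTheory.measure_eq_zero_of_disjoint_of_le_sum {α ι : Type*} [MeasurableSpace α]
    {μ : Measure α} {s : Finset ι} {R : ι → Set α} {H B : Set α}
    (hdisj : (s : Set ι).PairwiseDisjoint R) (hR : ∀ i ∈ s, MeasurableSet (R i))
    (hH : MeasurableSet H) (hRB : ∀ i ∈ s, R i ⊆ B) (hHB : H ⊆ B)
    (hHR : ∀ i ∈ s, Disjoint H (R i)) (hB : μ B ≤ ∑ i ∈ s, μ (R i)) (hBfin : μ B ≠ ⊤) :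
    μ H = 0 := by
  have hUB : (⋃ i ∈ s, R i) ⊆ B := iUnion₂_subset hRB
  have hUH : Disjoint (⋃ i ∈ s, R i) H := disjoint_iUnion₂_left.2 fun i hi => (hHR i hi).symm
  have hle : μ (⋃ i ∈ s, R i) + μ H ≤ μ (⋃ i ∈ s, R i) :=
    calc μ (⋃ i ∈ s, R i) + μ H = μ ((⋃ i ∈ s, R i) ∪ H) := (measure_union hUH hH).symm
      _ ≤ μ B := measure_mono (union_subset hUB hHB)
      _ ≤ ∑ i ∈ s, μ (R i) := hB
      _ = μ (⋃ i ∈ s, R i) := (measure_biUnion_finset hdisj hR).symm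
  have hUfin : μ (⋃ i ∈ s, R i) ≠ ⊤ := ne_top_of_le_ne_top hBfin (measure_mono hUB)
  rwa [(ENNReal.cancel_of_ne hUfin).add_le_iff_nonpos_right, nonpos_iff_eq_zero] at hle

theorem Real.volume_Ioo_prod_Ioo (a b c d : ℝ) :
    volume (Ioo a b ×ˢ Ioo c d) = ENNReal.ofReal (b - a) * ENNReal.ofReal (d - c) := by
  rw [Measure.volume_eq_prod, Measure.prod_prod, Real.volume_Ioo, Real.volume_Ioo]

theorem Real.volume_Icc_prod_Icc (a b c d : ℝ) :
    volume (Icc a b ×ˢ Icc c d) = ENNReal.ofReal (b - a) * ENNReal.ofReal (d - c) := by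
  rw [Measure.volume_eq_prod, Measure.prod_prod, Real.volume_Icc, Real.volume_Icc]

namespace Schematic

section

variable {V : Type*} {G : SimpleGraph V} {x : V → ℝ} {ω : V → V → ℝ} {ylo yhi : V → V → ℝ}
  {a b c d u v w z : V}

/-- The open interior of `R(a,b)`: rectangles sharing a side are then disjoint. -/
def edgeRect (x : V → ℝ) (ylo yhi : V → V → ℝ) (a b : V) : Set (ℝ × ℝ) :=
  Ioo (x a) (x b) ×ˢ Ioo (ylo a b) (yhi a b)

def hole (x : V → ℝ) (ylo yhi : V → V → ℝ) (u v w z : V) : Set (ℝ × ℝ) :=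
  Ioo (x w) (x z) ×ˢ Ioo (yhi w z) (ylo u v)

open Classical in
noncomputable def orientedEdges [Fintype V] (G : SimpleGraph V) (x : V → ℝ) : Finset (V × V) :=
  Finset.univ.filter fun p => G.Adj p.1 p.2 ∧ x p.1 < x p.2

theorem mem_orientedEdges [Fintype V] {p : V × V} :
    p ∈ orientedEdges G x ↔ G.Adj p.1 p.2 ∧ x p.1 < x p.2 := by
  simp [orientedEdges]

theorem totalWeight_eq_sum_orientedEdges [Fintype V] :
    totalWeight G ω x = ∑ p ∈ orientedEdges G x, ω p.1 p.2 := by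
  rw [orientedEdges, Finset.sum_filter, totalWeight]

theorem Wraps.lt (h : Wraps G x u v w z) : x u < x v := by
  obtain ⟨-, -, -, h₁, h₂, h₃⟩ := h
  linarith

theorem IsBE.eq_or_wraps_of_overlap (hbe : IsBE G x) (hab : G.Adj a b) (hcd : G.Adj c d)
    (hxab : x a < x b) (hxcd : x c < x d) (had : x a < x d) (hcb : x c < x b) :
    (a = c ∧ b = d) ∨ Wraps G x a b c d ∨ Wraps G x c d a b := by
  by_cases hne : s(a, b) = s(c, d)
  · rcases Sym2.eq_iff.1 hne with h | ⟨rfl, rfl⟩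
    · exact Or.inl h
    · exact absurd hxab (lt_asymm hxcd)
  have hcross := hbe.2
  rcases le_total (x a) (x c) with hac | hca
  · rcases le_or_gt (x d) (x b) with hdb | hbd
    · exact Or.inr (Or.inl ⟨hab, hcd, hne, hac, hxcd, hdb⟩)
    rcases hac.eq_or_lt with hac | hac
    · exact Or.inr (Or.inr ⟨hcd, hab, Ne.symm hne, hac.ge, hxab, hbd.le⟩)
    · exact absurd ⟨hac, hcb, hbd⟩ (hcross a b c d hab hcd)
  · rcases le_or_gt (x b) (x d) with hbd | hdb
    · exact Or.inr (Or.inr ⟨hcd, hab, Ne.symm hne, hca, hxab, hbd⟩)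
    rcases hca.eq_or_lt with hca | hca
    · exact Or.inr (Or.inl ⟨hab, hcd, hne, hca.ge, hxcd, hdb.le⟩)
    · exact absurd ⟨hca, had, hdb⟩ (hcross c d a b hcd hab)

namespace IsTwoDimBE

variable (h2d : IsTwoDimBE G ω x ylo yhi)
include h2d

theorem yhi_le_ylo_of_wraps (h : Wraps G x u v w z) : yhi w z ≤ ylo u v :=
  (h2d.2.2.2.2.2 u v h.1 h.lt).1 w z h

theorem ylo_le_yhi (hω : ∀ a b, G.Adj a b → 0 ≤ ω a b) (hab : G.Adj a b) (hx : x a < x b) :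
    ylo a b ≤ yhi a b := by
  have harea := h2d.2.2.2.2.1 a b hab hx
  have := (mul_nonneg_iff_of_pos_left (sub_pos.2 hx)).1 (harea ▸ hω a b hab)
  linarith

theorem volume_edgeRect (hab : G.Adj a b) (hx : x a < x b) :
    volume (edgeRect x ylo yhi a b) = ENNReal.ofReal (ω a b) := by
  rw [edgeRect, Real.volume_Ioo_prod_Ioo, ← ENNReal.ofReal_mul (sub_pos.2 hx).le,
    h2d.2.2.2.2.1 a b hab hx]

theorem sum_volume_edgeRect [Fintype V] (hω : ∀ a b, G.Adj a b → 0 ≤ ω a b) :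
    ∑ p ∈ orientedEdges G x, volume (edgeRect x ylo yhi p.1 p.2) =
      ENNReal.ofReal (totalWeight G ω x) := by
  rw [totalWeight_eq_sum_orientedEdges,
    ENNReal.ofReal_sum_of_nonneg fun p hp => hω p.1 p.2 (mem_orientedEdges.1 hp).1]
  refine Finset.sum_congr rfl fun p hp => ?_
  obtain ⟨hadj, hx⟩ := mem_orientedEdges.1 hp
  exact h2d.volume_edgeRect hadj hx

theorem disjoint_edgeRect (hab : G.Adj a b) (hcd : G.Adj c d) (hne : (a, b) ≠ (c, d)) :
    Disjoint (edgeRect x ylo yhi a b) (edgeRect x ylo yhi c d) := by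
  rw [Set.disjoint_left]
  rintro ⟨s, t⟩ ⟨⟨hs₁, hs₂⟩, ht₁, ht₂⟩ ⟨⟨hs₃, hs₄⟩, ht₃, ht₄⟩
  rcases h2d.1.eq_or_wraps_of_overlap hab hcd (by linarith) (by linarith) (by linarith)
    (by linarith) with ⟨rfl, rfl⟩ | h | h
  · exact hne rfl
  · linarith [h2d.yhi_le_ylo_of_wraps h]
  · linarith [h2d.yhi_le_ylo_of_wraps h]

theorem pairwiseDisjoint_edgeRect [Fintype V] :
    (orientedEdges G x : Set (V × V)).PairwiseDisjoint fun p => edgeRect x ylo yhi p.1 p.2 :=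
  fun _ hp _ hq hpq =>
    h2d.disjoint_edgeRect (mem_orientedEdges.1 hp).1 (mem_orientedEdges.1 hq).1 hpq

theorem disjoint_hole_edgeRect (hω : ∀ a b, G.Adj a b → 0 ≤ ω a b)
    (hdw : DirectlyWraps G x u v w z) (hab : G.Adj a b) :
    Disjoint (hole x ylo yhi u v w z) (edgeRect x ylo yhi a b) := by
  obtain ⟨hw, hdirect⟩ := hdw
  have hxuv := hw.lt
  obtain ⟨huv, hwz, -, hxuw, hxwz, hxzv⟩ := hw
  rw [Set.disjoint_left]
  rintro ⟨s, t⟩ ⟨⟨hs₁, hs₂⟩, ht₁, ht₂⟩ ⟨⟨hs₃, hs₄⟩, ht₃, ht₄⟩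
  rcases h2d.1.eq_or_wraps_of_overlap hab hwz (by linarith) hxwz (by linarith) (by linarith)
    with ⟨rfl, rfl⟩ | hab_wz | hwz_ab
  · linarith
  · have hxaw := hab_wz.2.2.2.1
    have hxzb := hab_wz.2.2.2.2.2
    rcases h2d.1.eq_or_wraps_of_overlap hab huv (by linarith) hxuv (by linarith) (by linarith)
      with ⟨rfl, rfl⟩ | hab_uv | huv_ab
    · linarith
    · linarith [h2d.yhi_le_ylo_of_wraps hab_uv, h2d.ylo_le_yhi hω huv hxuv]
    · exact hdirect ⟨a, b, huv_ab, hab_wz⟩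
  · linarith [h2d.yhi_le_ylo_of_wraps hwz_ab, h2d.ylo_le_yhi hω hwz hxwz]

end IsTwoDimBE

namespace IsBoundingBox

variable {X₁ X₂ Y₁ Y₂ : ℝ} (hbb : IsBoundingBox G x ylo yhi X₁ X₂ Y₁ Y₂)
include hbb

theorem volume_eq :
    volume (Icc X₁ X₂ ×ˢ Icc Y₁ Y₂) = ENNReal.ofReal ((X₂ - X₁) * (Y₂ - Y₁)) := by
  obtain ⟨a, b, hab, hx, -⟩ := hbb.2.1
  obtain ⟨h₁, h₂, -⟩ := hbb.1 a b hab hx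
  rw [Real.volume_Icc_prod_Icc, ENNReal.ofReal_mul (by linarith)]

theorem edgeRect_subset (hab : G.Adj a b) (hx : x a < x b) :
    edgeRect x ylo yhi a b ⊆ Icc X₁ X₂ ×ˢ Icc Y₁ Y₂ := by
  obtain ⟨h₁, h₂, h₃, h₄⟩ := hbb.1 a b hab hx
  exact prod_mono (Ioo_subset_Icc_self.trans (Icc_subset_Icc h₁ h₂))
    (Ioo_subset_Icc_self.trans (Icc_subset_Icc h₃ h₄))

theorem hole_subset (h2d : IsTwoDimBE G ω x ylo yhi) (hω : ∀ a b, G.Adj a b → 0 ≤ ω a b)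
    (hw : Wraps G x u v w z) : hole x ylo yhi u v w z ⊆ Icc X₁ X₂ ×ˢ Icc Y₁ Y₂ := by
  have hxuv := hw.lt
  obtain ⟨huv, hwz, -, -, hxwz, -⟩ := hw
  obtain ⟨h₁, h₂, h₃, -⟩ := hbb.1 w z hwz hxwz
  obtain ⟨-, -, -, h₄⟩ := hbb.1 u v huv hxuv
  have hlo := h2d.ylo_le_yhi hω hwz hxwz
  have hhi := h2d.ylo_le_yhi hω huv hxuv
  exact prod_mono (Ioo_subset_Icc_self.trans (Icc_subset_Icc h₁ h₂))
    (Ioo_subset_Icc_self.trans (Icc_subset_Icc (by linarith) (by linarith)))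

end IsBoundingBox

end

theorem no_holes_in_area_optimal_embedding_general {V : Type*} [Fintype V]
    (G : SimpleGraph V) (ω : V → V → ℝ)
    (hpos : ∀ u v, G.Adj u v → 0 < ω u v)
    (x : V → ℝ) (ylo yhi : V → V → ℝ)
    (h2d : IsTwoDimBE G ω x ylo yhi)
    (X₁ X₂ Y₁ Y₂ : ℝ) (hbb : IsBoundingBox G x ylo yhi X₁ X₂ Y₁ Y₂)
    (harea : (X₂ - X₁) * (Y₂ - Y₁) = totalWeight G ω x)
    (u v w z : V) (hdw : DirectlyWraps G x u v w z) :
    ylo u v = yhi w z := by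
  have hω : ∀ a b, G.Adj a b → 0 ≤ ω a b := fun a b h => (hpos a b h).le
  refine le_antisymm ?_ (h2d.yhi_le_ylo_of_wraps hdw.1)
  by_contra! hlt
  have hvol : volume (hole x ylo yhi u v w z) = 0 :=
    measure_eq_zero_of_disjoint_of_le_sum h2d.pairwiseDisjoint_edgeRect
      (fun _ _ => measurableSet_Ioo.prod measurableSet_Ioo)
      (measurableSet_Ioo.prod measurableSet_Ioo)
      (fun p hp => hbb.edgeRect_subset (mem_orientedEdges.1 hp).1 (mem_orientedEdges.1 hp).2)
      (hbb.hole_subset h2d hω hdw.1)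
      (fun p hp => h2d.disjoint_hole_edgeRect hω hdw (mem_orientedEdges.1 hp).1)
      (by rw [hbb.volume_eq, harea, h2d.sum_volume_edgeRect hω])
      (by rw [hbb.volume_eq]; exact ENNReal.ofReal_ne_top)
  have hxwz : x w < x z := hdw.1.2.2.2.2.1
  rw [hole, Real.volume_Ioo_prod_Ioo, mul_eq_zero, ENNReal.ofReal_eq_zero,
    ENNReal.ofReal_eq_zero] at hvol
  rcases hvol with h | h <;> linarith

/-- in an area-optimal two-dimensional book-embedding of a biconnected
weighted graph, for every edge `e`, the bottom side of the rectangle of `e` is at the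
same height as the top side of the rectangle of every edge that `e` directly wraps
around. -/
theorem no_holes_in_area_optimal_embedding {V : Type*} [Fintype V]
    (G : SimpleGraph V) (ω : V → V → ℝ)
    (hsym : ∀ u v, ω u v = ω v u)
    (hpos : ∀ u v, G.Adj u v → 0 < ω u v)
    (hbi : IsBiconnected G)
    (x : V → ℝ) (ylo yhi : V → V → ℝ)
    (h2d : IsTwoDimBE G ω x ylo yhi)
    (X₁ X₂ Y₁ Y₂ : ℝ) (hbb : IsBoundingBox G x ylo yhi X₁ X₂ Y₁ Y₂)
    (harea : (X₂ - X₁) * (Y₂ - Y₁) = totalWeight G ω x)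
    (u v w z : V) (hdw : DirectlyWraps G x u v w z) :
    ylo u v = yhi w z :=
  no_holes_in_area_optimal_embedding_general G ω hpos x ylo yhi h2d X₁ X₂ Y₁ Y₂ hbb harea u v w z
    hdw

end Schematic
end
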